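/- arXiv:2409.03915 — 14 statements merged into one kernel-verified Lean document; each statement's English description precedes it below -/
import Mathlib

section
/- Let d ≥ 1, let f : ℝ^d → ℝ be Lipschitz continuous and strictly increasing under scalar translation (SISTr), and let ℓ ∈ ℝ. Then for every x ∈ ℝ^d there exists a unique real number c_x such that f(x + c_x·𝟏) = ℓ, and the map x ↦ c_x is continuous on ℝ^d. -/
/-- `g` is strictly increasing under scalar translation at the point `x`:
the map `c ↦ g (x + c • 𝟏)` is strictly increasing and maps `ℝ` onto `ℝ`. -/
def SISTrAt {d : ℕ} (g : (Fin d → ℝ) → ℝ) (x : Fin d → ℝ) : Prop :=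
  StrictMono (fun c : ℝ => g (x + c • (1 : Fin d → ℝ))) ∧
  Function.Surjective (fun c : ℝ => g (x + c • (1 : Fin d → ℝ)))

/-- `g` is strictly increasing under scalar translation (SISTr). -/
def SISTr {d : ℕ} (g : (Fin d → ℝ) → ℝ) : Prop := ∀ x, SISTrAt g x

/-- Near `x`, the strict inequalities `F · a < ℓ < F · b` persist, and they trap `c` in `(a, b)`. -/
theorem continuous_of_strictMono_of_apply_eq {X α β : Type*} [TopologicalSpace X]
    [LinearOrder α] [TopologicalSpace α] [OrderTopology α]
    [LinearOrder β] [TopologicalSpace β] [OrderClosedTopology β]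
    {F : X → α → β} (hF : ∀ a, Continuous fun x => F x a) (hmono : ∀ x, StrictMono (F x))
    {ℓ : β} {c : X → α} (hc : ∀ x, F x (c x) = ℓ) : Continuous c := by
  refine continuous_iff_continuousAt.2 fun x => tendsto_order.2 ⟨fun a ha => ?_, fun b hb => ?_⟩
  · have hFa : F x a < ℓ := hc x ▸ hmono x ha
    filter_upwards [(hF a).continuousAt.eventually_lt_const hFa] with y hy
    exact (hmono y).lt_iff_lt.1 (hc y ▸ hy)
  · have hFb : ℓ < F x b := hc x ▸ hmono x hb
    filter_upwards [(hF b).continuousAt.eventually_const_lt hFb] with y hy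
    exact (hmono y).lt_iff_lt.1 (hc y ▸ hy)

theorem stmt0_general (d : ℕ) (f : (Fin d → ℝ) → ℝ)
    (hLip : ∃ K : NNReal, LipschitzWith K f) (hSISTr : SISTr f) (ℓ : ℝ) :
    ∃ c : (Fin d → ℝ) → ℝ, Continuous c ∧
      ∀ x : Fin d → ℝ, f (x + c x • (1 : Fin d → ℝ)) = ℓ ∧
        ∀ c' : ℝ, f (x + c' • (1 : Fin d → ℝ)) = ℓ → c' = c x := by
  choose c hc using fun x => (hSISTr x).2 ℓ
  obtain ⟨K, hK⟩ := hLip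
  have hshift_cont (a : ℝ) : Continuous fun x => f (x + a • (1 : Fin d → ℝ)) :=
    hK.continuous.comp (continuous_add_const _)
  refine ⟨c, continuous_of_strictMono_of_apply_eq hshift_cont (fun x => (hSISTr x).1) hc,
    fun x => ⟨hc x, fun c' hc' => (hSISTr x).1.injective (hc'.trans (hc x).symm)⟩⟩

theorem stmt0 (d : ℕ) (hd : 1 ≤ d) (f : (Fin d → ℝ) → ℝ)
    (hLip : ∃ K : NNReal, LipschitzWith K f) (hSISTr : SISTr f) (ℓ : ℝ) :
    ∃ c : (Fin d → ℝ) → ℝ, Continuous c ∧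
      ∀ x : Fin d → ℝ, f (x + c x • (1 : Fin d → ℝ)) = ℓ ∧
        ∀ c' : ℝ, f (x + c' • (1 : Fin d → ℝ)) = ℓ → c' = c x :=
  stmt0_general d f hLip hSISTr ℓ
end

section
/- Let f : ℝ^d → ℝ be Lipschitz continuous and SISTr. Then: (1) for every x ∈ ℝ^d and every δ > 0, the set {ε > 0 : min(f(x + ε·𝟏) − f(x), f(x) − f(x − ε·𝟏)) = δ} is nonempty and has a smallest element, denoted ε(x,δ); (2) for every bounded set D ⊆ ℝ^d and every δ > 0, sup_{x∈D} ε(x,δ) < ∞; and (3) for every bounded set D ⊆ ℝ^d and every η > 0 there exists δ₀ > 0 such that sup_{x∈D} ε(x,δ) ≤ η for all δ with 0 < δ ≤ δ₀. -/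
/-- The two-sided gap function. -/
noncomputable def gg {d : ℕ} (f : (Fin d → ℝ) → ℝ) (x : Fin d → ℝ) (e : ℝ) : ℝ :=
  min (f (x + e • (1 : Fin d → ℝ)) - f x) (f x - f (x - e • (1 : Fin d → ℝ)))

lemma gg_sub {d : ℕ} (x : Fin d → ℝ) (e : ℝ) :
    x - e • (1 : Fin d → ℝ) = x + (-e) • (1 : Fin d → ℝ) := by
  rw [sub_eq_add_neg, neg_smul]

lemma gg_zero {d : ℕ} (f : (Fin d → ℝ) → ℝ) (x : Fin d → ℝ) : gg f x 0 = 0 := by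
  simp [gg]

lemma gg_cont {d : ℕ} {f : (Fin d → ℝ) → ℝ} (hf : Continuous f) (x : Fin d → ℝ) :
    Continuous (gg f x) := by
  unfold gg
  apply Continuous.min
  · exact (hf.comp (by continuity)).sub continuous_const
  · exact continuous_const.sub (hf.comp (by continuity))

lemma gg_le_left {d : ℕ} (f : (Fin d → ℝ) → ℝ) (x : Fin d → ℝ) (e : ℝ) :
    gg f x e ≤ f (x + e • (1 : Fin d → ℝ)) - f x := min_le_left _ _

lemma gg_pos_e {d : ℕ} {f : (Fin d → ℝ) → ℝ} (hS : SISTr f) {x : Fin d → ℝ} {δ e : ℝ}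
    (hδ : 0 < δ) (he : gg f x e = δ) : 0 < e := by
  have hmin := gg_le_left f x e
  rw [he] at hmin
  have h1 : f x < f (x + e • (1 : Fin d → ℝ)) := by linarith
  have h0 : f (x + (0:ℝ) • (1 : Fin d → ℝ)) = f x := by simp
  have hiff := ((hS x).1).lt_iff_lt (a := 0) (b := e)
  rw [h0] at hiff
  exact hiff.mp h1

/-- Key two-sided lower bound lemma. -/
lemma gg_key {d : ℕ} {f : (Fin d → ℝ) → ℝ} (hS : SISTr f) (x : Fin d → ℝ)
    {δ c1 c2 e0 : ℝ} (h1 : c1 ≤ e0) (h2 : -e0 ≤ c2)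
    (hA : δ ≤ f (x + c1 • (1 : Fin d → ℝ)) - f x)
    (hB : δ ≤ f x - f (x + c2 • (1 : Fin d → ℝ))) : δ ≤ gg f x e0 := by
  have m := (hS x).1.monotone
  have m1 : f (x + c1 • (1 : Fin d → ℝ)) ≤ f (x + e0 • (1 : Fin d → ℝ)) := m h1
  have m2 : f (x + (-e0) • (1 : Fin d → ℝ)) ≤ f (x + c2 • (1 : Fin d → ℝ)) := m h2
  unfold gg
  rw [gg_sub]
  exact le_min (by linarith) (by linarith)

/-- Existence of a point where the gap is at least δ. -/
lemma gg_big {d : ℕ} {f : (Fin d → ℝ) → ℝ} (hS : SISTr f) (x : Fin d → ℝ) (δ : ℝ) :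
    ∃ e0, δ ≤ gg f x e0 := by
  obtain ⟨c1, hc1⟩ := (hS x).2 (f x + δ)
  obtain ⟨c2, hc2⟩ := (hS x).2 (f x - δ)
  simp only at hc1 hc2
  refine ⟨max c1 (-c2), gg_key hS x (c2 := c2) (le_max_left _ _) ?_ ?_ ?_⟩
  · have := le_max_right c1 (-c2); linarith
  · rw [hc1]; linarith
  · rw [hc2]; linarith

/-- IVT step. -/
lemma gg_ivt {d : ℕ} {f : (Fin d → ℝ) → ℝ} (hf : Continuous f) (hS : SISTr f)
    (x : Fin d → ℝ) {δ e0 : ℝ} (hδ : 0 < δ) (he0 : δ ≤ gg f x e0) :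
    ∃ e, 0 < e ∧ e ≤ e0 ∧ gg f x e = δ := by
  have h0e : (0:ℝ) ≤ e0 := by
    by_contra h
    push_neg at h
    have h1 : f (x + e0 • (1 : Fin d → ℝ)) < f (x + (0:ℝ) • (1 : Fin d → ℝ)) := (hS x).1 h
    have h0 : f (x + (0:ℝ) • (1 : Fin d → ℝ)) = f x := by simp
    rw [h0] at h1
    have hmin := gg_le_left f x e0
    linarith
  have hmem : δ ∈ Set.Icc (gg f x 0) (gg f x e0) := by
    rw [gg_zero]; exact ⟨hδ.le, he0⟩
  obtain ⟨e, heI, hge⟩ := intermediate_value_Icc h0e ((gg_cont hf x).continuousOn) hmem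
  exact ⟨e, gg_pos_e hS hδ hge, heI.2, hge⟩

lemma gg_least {d : ℕ} {f : (Fin d → ℝ) → ℝ} (hf : Continuous f) (hS : SISTr f)
    (x : Fin d → ℝ) {δ : ℝ} (hδ : 0 < δ) :
    IsLeast {e : ℝ | 0 < e ∧ gg f x e = δ} (sInf {e : ℝ | 0 < e ∧ gg f x e = δ}) := by
  have hSeq : {e : ℝ | 0 < e ∧ gg f x e = δ} = {e : ℝ | gg f x e = δ} := by
    ext e
    exact ⟨fun h => h.2, fun h => ⟨gg_pos_e hS hδ h, h⟩⟩
  rw [hSeq]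
  have hclosed : IsClosed {e : ℝ | gg f x e = δ} := isClosed_eq (gg_cont hf x) continuous_const
  have hne : {e : ℝ | gg f x e = δ}.Nonempty := by
    obtain ⟨e0, he0⟩ := gg_big hS x δ
    obtain ⟨e, _, _, hge⟩ := gg_ivt hf hS x hδ he0
    exact ⟨e, hge⟩
  have hbdd : BddBelow {e : ℝ | gg f x e = δ} :=
    ⟨0, fun e he => (gg_pos_e hS hδ he).le⟩
  exact ⟨hclosed.csInf_mem hne hbdd, fun e he => csInf_le hbdd he⟩

lemma gg_eps_le {d : ℕ} {f : (Fin d → ℝ) → ℝ} (hf : Continuous f) (hS : SISTr f)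
    (x : Fin d → ℝ) {δ e0 : ℝ} (hδ : 0 < δ) (he0 : δ ≤ gg f x e0) :
    sInf {e : ℝ | 0 < e ∧ gg f x e = δ} ≤ e0 := by
  obtain ⟨e, hep, hee0, hge⟩ := gg_ivt hf hS x hδ he0
  exact le_trans ((gg_least hf hS x hδ).2 ⟨hep, hge⟩) hee0

theorem stmt1 (d : ℕ) (f : (Fin d → ℝ) → ℝ)
    (hLip : ∃ K : NNReal, LipschitzWith K f) (hSISTr : SISTr f) :
    ∃ eps : (Fin d → ℝ) → ℝ → ℝ,
      -- (1) for each `x` and `δ > 0`, the set has a least element `eps x δ`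
      (∀ (x : Fin d → ℝ) (δ : ℝ), 0 < δ →
        IsLeast {e : ℝ | 0 < e ∧
          min (f (x + e • (1 : Fin d → ℝ)) - f x)
              (f x - f (x - e • (1 : Fin d → ℝ))) = δ} (eps x δ)) ∧
      -- (2) `sup_{x ∈ D} eps x δ < ∞` for bounded `D`
      (∀ D : Set (Fin d → ℝ), Bornology.IsBounded D → ∀ δ : ℝ, 0 < δ →
        ∃ M : ℝ, ∀ x ∈ D, eps x δ ≤ M) ∧
      -- (3) the sup tends to `0` as `δ ↓ 0`
      (∀ D : Set (Fin d → ℝ), Bornology.IsBounded D → ∀ η : ℝ, 0 < η →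
        ∃ δ₀ : ℝ, 0 < δ₀ ∧ ∀ δ : ℝ, 0 < δ → δ ≤ δ₀ → ∀ x ∈ D, eps x δ ≤ η) := by
  obtain ⟨K, hK⟩ := hLip
  have hf : Continuous f := hK.continuous
  refine ⟨fun x δ => sInf {e : ℝ | 0 < e ∧ gg f x e = δ}, ?_, ?_, ?_⟩
  · intro x δ hδ
    exact gg_least hf hSISTr x hδ
  · -- Part (2)
    intro D hD δ hδ
    obtain ⟨R, hR⟩ := hD.subset_closedBall 0
    set R' := max R 0 with hR'def
    have hR0 : (0:ℝ) ≤ R' := le_max_right _ _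
    have hR' : D ⊆ Metric.closedBall 0 R' :=
      hR.trans (Metric.closedBall_subset_closedBall (le_max_left _ _))
    obtain ⟨c1, hc1⟩ := (hSISTr 0).2 (f 0 + ((K:ℝ) * R' + (K:ℝ) * R' + δ))
    obtain ⟨c2, hc2⟩ := (hSISTr 0).2 (f 0 - ((K:ℝ) * R' + (K:ℝ) * R' + δ))
    simp only at hc1 hc2
    have hLipAbs : ∀ a b : Fin d → ℝ, |f a - f b| ≤ (K:ℝ) * dist a b := fun a b => by
      rw [← Real.dist_eq]; exact hK.dist_le_mul a b
    refine ⟨max c1 (-c2), fun x hx => ?_⟩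
    have hxR : dist x 0 ≤ R' := Metric.mem_closedBall.mp (hR' hx)
    have hKx : (K:ℝ) * dist x 0 ≤ (K:ℝ) * R' :=
      mul_le_mul_of_nonneg_left hxR K.coe_nonneg
    have hb1 : |f (x + c1 • (1 : Fin d → ℝ)) - f (0 + c1 • (1 : Fin d → ℝ))| ≤ (K:ℝ) * R' := by
      have h := hLipAbs (x + c1 • (1 : Fin d → ℝ)) (0 + c1 • (1 : Fin d → ℝ))
      rw [dist_add_right] at h
      exact h.trans hKx
    have hb2 : |f (x + c2 • (1 : Fin d → ℝ)) - f (0 + c2 • (1 : Fin d → ℝ))| ≤ (K:ℝ) * R' := by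
      have h := hLipAbs (x + c2 • (1 : Fin d → ℝ)) (0 + c2 • (1 : Fin d → ℝ))
      rw [dist_add_right] at h
      exact h.trans hKx
    have hb0 : |f x - f 0| ≤ (K:ℝ) * R' := (hLipAbs x 0).trans hKx
    have hab1 := abs_le.mp hb1
    have hab2 := abs_le.mp hb2
    have hab0 := abs_le.mp hb0
    apply gg_eps_le hf hSISTr x hδ
    refine gg_key hSISTr x (c2 := c2) (le_max_left c1 (-c2)) ?_ ?_ ?_
    · have := le_max_right c1 (-c2); linarith
    · rw [hc1] at hab1
      obtain ⟨ha, hb⟩ := hab1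
      obtain ⟨ha0, hb0'⟩ := hab0
      linarith
    · rw [hc2] at hab2
      obtain ⟨ha, hb⟩ := hab2
      obtain ⟨ha0, hb0'⟩ := hab0
      linarith
  · -- Part (3)
    intro D hD η hη
    rcases D.eq_empty_or_nonempty with rfl | hne
    · exact ⟨1, one_pos, fun δ _ _ x hx => absurd hx (Set.notMem_empty x)⟩
    have hcomp : IsCompact (closure D) := hD.isCompact_closure
    have hcont : Continuous (fun x => gg f x η) := by
      unfold gg
      apply Continuous.min
      · exact (hf.comp (by continuity)).sub hf
      · exact hf.sub (hf.comp (by continuity))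
    obtain ⟨x0, hx0mem, hx0min⟩ := hcomp.exists_isMinOn hne.closure hcont.continuousOn
    have hδ0pos : 0 < gg f x0 η := by
      have h1 : f (x0 + (0:ℝ) • (1 : Fin d → ℝ)) < f (x0 + η • (1 : Fin d → ℝ)) :=
        (hSISTr x0).1 hη
      have h2 : f (x0 + (-η) • (1 : Fin d → ℝ)) < f (x0 + (0:ℝ) • (1 : Fin d → ℝ)) :=
        (hSISTr x0).1 (by linarith)
      have h0 : f (x0 + (0:ℝ) • (1 : Fin d → ℝ)) = f x0 := by simp
      rw [h0] at h1 h2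
      unfold gg
      rw [gg_sub]
      exact lt_min (by linarith) (by linarith)
    refine ⟨gg f x0 η, hδ0pos, fun δ hδ hδle x hx => ?_⟩
    exact gg_eps_le hf hSISTr x hδ (le_trans hδle (hx0min (subset_closure hx)))
end

section
/- Suppose the SMDP data (S, A, p, t) has the following structural property: for every r̄ ∈ ℝ and every q ∈ ℝ^{S×A} satisfying q(s,a) = −t(s,a)·r̄ + Σ_{s'} p(s,a,s')·max_{a'} q(s',a') for all (s,a), one has r̄ = 0 and q is a constant vector (q = c·𝟏 for some c ∈ ℝ). Let f_∞ : ℝ^{S×A} → ℝ satisfy f_∞(0) = 0 and be SISTr at the origin. Then the only q ∈ ℝ^{S×A} satisfying q(s,a) = −t(s,a)·f_∞(q) + Σ_{s'} p(s,a,s')·max_{a'} q(s',a') for all (s,a) is q = 0. -/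
lemma eq_zero_of_injective_along_one {ι : Type*} (f : (ι → ℝ) → ℝ) (hf0 : f 0 = 0)
    (hinj : Function.Injective fun c : ℝ => f ((0 : ι → ℝ) + c • (1 : ι → ℝ)))
    {c : ℝ} (hc : f (fun _ => c) = 0) : c = 0 :=
  hinj <| by
    have hline : (0 : ι → ℝ) + c • 1 = fun _ => c := by ext; simp
    simp only [hline, hc, zero_smul, add_zero, hf0]

theorem stmt2_general (S A : Type*) [Fintype S] [Fintype A] [Nonempty A]
    (p : S × A × S → ℝ) (t : S × A → ℝ)
    -- structural property: solutions of the zero-reward AOE are `r̄ = 0` and constant `q`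
    (hstruct : ∀ (rbar : ℝ) (q : S × A → ℝ),
      (∀ s a, q (s, a) = - t (s, a) * rbar +
        ∑ s' : S, p (s, a, s') *
          (Finset.univ.sup' Finset.univ_nonempty fun a' : A => q (s', a'))) →
      rbar = 0 ∧ ∃ c : ℝ, q = fun _ => c)
    (finf : (S × A → ℝ) → ℝ) (hf0 : finf 0 = 0)
    -- `finf` is SISTr at the origin
    (hmono : StrictMono (fun c : ℝ => finf ((0 : S × A → ℝ) + c • (1 : S × A → ℝ)))) :
    ∀ q : S × A → ℝ,
      (∀ s a, q (s, a) = - t (s, a) * finf q +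
        ∑ s' : S, p (s, a, s') *
          (Finset.univ.sup' Finset.univ_nonempty fun a' : A => q (s', a'))) →
      q = 0 := by
  intro q hq
  obtain ⟨hfq, c, rfl⟩ := hstruct (finf q) q hq
  obtain rfl := eq_zero_of_injective_along_one finf hf0 hmono.injective hfq
  rfl

theorem stmt2 (S A : Type*) [Fintype S] [Fintype A] [Nonempty S] [Nonempty A]
    (p : S × A × S → ℝ) (t : S × A → ℝ)
    (hp : ∀ s a s', 0 ≤ p (s, a, s'))
    (hp1 : ∀ s a, ∑ s' : S, p (s, a, s') = 1)
    (ht : ∀ s a, 0 < t (s, a))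
    -- structural property: solutions of the zero-reward AOE are `r̄ = 0` and constant `q`
    (hstruct : ∀ (rbar : ℝ) (q : S × A → ℝ),
      (∀ s a, q (s, a) = - t (s, a) * rbar +
        ∑ s' : S, p (s, a, s') *
          (Finset.univ.sup' Finset.univ_nonempty fun a' : A => q (s', a'))) →
      rbar = 0 ∧ ∃ c : ℝ, q = fun _ => c)
    (finf : (S × A → ℝ) → ℝ) (hf0 : finf 0 = 0)
    -- `finf` is SISTr at the origin
    (hmono : StrictMono (fun c : ℝ => finf ((0 : S × A → ℝ) + c • (1 : S × A → ℝ))))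
    (hsurj : Function.Surjective
      (fun c : ℝ => finf ((0 : S × A → ℝ) + c • (1 : S × A → ℝ)))) :
    ∀ q : S × A → ℝ,
      (∀ s a, q (s, a) = - t (s, a) * finf q +
        ∑ s' : S, p (s, a, s') *
          (Finset.univ.sup' Finset.univ_nonempty fun a' : A => q (s', a'))) →
      q = 0 :=
  stmt2_general S A p t hstruct finf hf0 hmono
end

section
/- Let f : ℝ^d → ℝ be Lipschitz continuous and SISTr, let ℓ ∈ ℝ, and let Q ⊆ ℝ^d be nonempty, closed, connected, and invariant under scalar translation (q ∈ Q and c ∈ ℝ imply q + c·𝟏 ∈ Q). Then the set Q_f := {q ∈ Q : f(q) = ℓ} is nonempty, closed, and connected. -/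
theorem stmt3 (d : ℕ) (f : (Fin d → ℝ) → ℝ)
    (hLip : ∃ K : NNReal, LipschitzWith K f) (hSISTr : SISTr f) (ℓ : ℝ)
    (Q : Set (Fin d → ℝ)) (hne : Q.Nonempty) (hcl : IsClosed Q) (hconn : IsConnected Q)
    (hinv : ∀ q ∈ Q, ∀ c : ℝ, q + c • (1 : Fin d → ℝ) ∈ Q) :
    ({q ∈ Q | f q = ℓ}).Nonempty ∧ IsClosed {q ∈ Q | f q = ℓ} ∧
      IsConnected {q ∈ Q | f q = ℓ} := by
  obtain ⟨K, hK⟩ := hLip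
  have hfc : Continuous f := hK.continuous
  choose c hc using fun x => (hSISTr x).2 ℓ
  have hc' : ∀ x, f (x + c x • (1 : Fin d → ℝ)) = ℓ := hc
  have huniq : ∀ x a, f (x + a • (1 : Fin d → ℝ)) = ℓ → a = c x := by
    intro x a ha
    exact (hSISTr x).1.injective (ha.trans (hc x).symm)
  have hlt : ∀ x a, f (x + a • (1 : Fin d → ℝ)) < ℓ → a < c x := by
    intro x a ha
    by_contra h
    push_neg at h
    have h2 := (hSISTr x).1.monotone h
    rw [hc' x] at h2
    linarith
  have hgt : ∀ x a, ℓ < f (x + a • (1 : Fin d → ℝ)) → c x < a := by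
    intro x a ha
    by_contra h
    push_neg at h
    have h2 := (hSISTr x).1.monotone h
    rw [hc' x] at h2
    linarith
  have hcc : Continuous c := by
    rw [continuous_iff_continuousAt]
    intro x₀
    rw [ContinuousAt, tendsto_order]
    constructor
    · intro a ha
      have h1 : f (x₀ + a • (1 : Fin d → ℝ)) < ℓ := by
        have := (hSISTr x₀).1 ha
        simp only at this
        rw [hc' x₀] at this
        exact this
      have hopen : IsOpen {x : Fin d → ℝ | f (x + a • (1 : Fin d → ℝ)) < ℓ} :=
        isOpen_lt (hfc.comp (continuous_id.add continuous_const)) continuous_const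
      filter_upwards [hopen.mem_nhds h1] with x hx
      exact hlt x a hx
    · intro b hb
      have h1 : ℓ < f (x₀ + b • (1 : Fin d → ℝ)) := by
        have := (hSISTr x₀).1 hb
        simp only at this
        rw [hc' x₀] at this
        exact this
      have hopen : IsOpen {x : Fin d → ℝ | ℓ < f (x + b • (1 : Fin d → ℝ))} :=
        isOpen_lt continuous_const (hfc.comp (continuous_id.add continuous_const))
      filter_upwards [hopen.mem_nhds h1] with x hx
      exact hgt x b hx
  set r : (Fin d → ℝ) → (Fin d → ℝ) := fun x => x + c x • (1 : Fin d → ℝ) with hr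
  have hrc : Continuous r := continuous_id.add (hcc.smul continuous_const)
  have hQf : {q ∈ Q | f q = ℓ} = r '' Q := by
    ext q
    constructor
    · rintro ⟨hq, hfq⟩
      refine ⟨q, hq, ?_⟩
      have h0 : (0 : ℝ) = c q := huniq q 0 (by simpa using hfq)
      simp [hr, ← h0]
    · rintro ⟨x, hx, rfl⟩
      exact ⟨hinv x hx (c x), hc x⟩
  refine ⟨?_, ?_, ?_⟩
  · rw [hQf]; exact hne.image r
  · exact hcl.inter (isClosed_eq hfc continuous_const)
  · rw [hQf]; exact hconn.image r hrc.continuousOn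
end

section
/- Let (S, A, p, t, r) be SMDP data and let f : ℝ^{S×A} → ℝ be Lipschitz continuous such that the pointwise scaling limit f_∞(q) := lim_{c→∞} f(cq)/c exists for every q. Suppose the only q ∈ ℝ^{S×A} satisfying q(s,a) = −t(s,a)·f_∞(q) + Σ_{s'} p(s,a,s')·max_{a'} q(s',a') for all (s,a) is q = 0. Then the solution set {q ∈ ℝ^{S×A} : q(s,a) = r(s,a) − t(s,a)·f(q) + Σ_{s'} p(s,a,s')·max_{a'} q(s',a') for all (s,a)} is bounded. -/
/-!
If the solution set were unbounded, solutions `q n` with `‖q n‖ → ∞`, normalised to the unit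
sphere, would have a subsequence converging to some `v` with `‖v‖ = 1`. Dividing the equation by
`‖q n‖`, the reward term vanishes, the max-term is positively homogeneous, and the Lipschitz bound
gives `f (c • u) / c → f_∞ v` as `c → ∞`, `u → v`. So `v` solves the `f_∞`-equation, contradicting
`v ≠ 0`.
-/

open Filter Topology Finset

section Rescaling

variable {E : Type*} [NormedAddCommGroup E] [NormedSpace ℝ E] [ProperSpace E]

theorem isBounded_fixedPoints_of_tendsto_rescale {Φ Ψ : E → E}
    (hΦ : ∀ v, Tendsto (fun x : ℝ × E => x.1⁻¹ • Φ (x.1 • x.2)) (atTop ×ˢ 𝓝 v) (𝓝 (Ψ v)))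
    (hΨ : ∀ v, Ψ v = v → v = 0) :
    Bornology.IsBounded (Function.fixedPoints Φ) := by
  rw [isBounded_iff_forall_norm_le]
  by_contra! hunb
  choose q hq_fixed hq_norm using hunb
  set c : ℕ → ℝ := fun n => ‖q n‖
  have hc_pos : ∀ n, 0 < c n := fun n => (Nat.cast_nonneg n).trans_lt (hq_norm n)
  have hc_top : Tendsto c atTop atTop :=
    tendsto_atTop_mono (fun n => (hq_norm n).le) tendsto_natCast_atTop_atTop
  set u : ℕ → E := fun n => (c n)⁻¹ • q n
  have hu_sphere : ∀ n, u n ∈ Metric.sphere (0 : E) 1 := fun n => by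
    simp [u, c, norm_smul, (hc_pos n).ne']
  obtain ⟨v, hv, φ, hφ, hu_v⟩ := (isCompact_sphere (0 : E) 1).tendsto_subseq hu_sphere
  have hu_rescale : ∀ n, u n = (c n)⁻¹ • Φ (c n • u n) := fun n => by
    simp only [u, smul_smul, mul_inv_cancel₀ (hc_pos n).ne', one_smul, (hq_fixed n).eq]
  have hu_Ψ : Tendsto (u ∘ φ) atTop (𝓝 (Ψ v)) := by
    have := (hΦ v).comp ((hc_top.comp hφ.tendsto_atTop).prodMk hu_v)
    simpa only [Function.comp_def, ← hu_rescale] using this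
  have hv_zero := hΨ v (tendsto_nhds_unique hu_Ψ hu_v)
  simp [hv_zero] at hv

end Rescaling

theorem LipschitzWith.tendsto_div_comp_smul {E : Type*} [SeminormedAddCommGroup E]
    [NormedSpace ℝ E] {f : E → ℝ} {K : NNReal} (hf : LipschitzWith K f) {v : E} {L : ℝ}
    (hv : Tendsto (fun c : ℝ => f (c • v) / c) atTop (𝓝 L)) :
    Tendsto (fun x : ℝ × E => f (x.1 • x.2) / x.1) (atTop ×ˢ 𝓝 v) (𝓝 L) := by
  have hdiff_le : ∀ᶠ x : ℝ × E in atTop ×ˢ 𝓝 v,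
      ‖f (x.1 • x.2) / x.1 - f (x.1 • v) / x.1‖ ≤ K * ‖x.2 - v‖ := by
    filter_upwards [tendsto_fst.eventually (eventually_gt_atTop 0)] with ⟨c, u⟩ hc
    rw [← sub_div, norm_div, Real.norm_of_nonneg hc.le, div_le_iff₀ hc]
    calc ‖f (c • u) - f (c • v)‖ ≤ K * ‖c • u - c • v‖ := hf.norm_sub_le _ _
      _ = K * ‖u - v‖ * c := by
        rw [← smul_sub, norm_smul, Real.norm_of_nonneg hc.le]; ring
  have hdiff : Tendsto (fun x : ℝ × E => f (x.1 • x.2) / x.1 - f (x.1 • v) / x.1)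
      (atTop ×ˢ 𝓝 v) (𝓝 0) := by
    refine squeeze_zero_norm' hdiff_le ?_
    simpa using ((tendsto_snd (f := atTop) (g := 𝓝 v)).sub_const v).norm.const_mul (K : ℝ)
  simpa using hdiff.add (hv.comp tendsto_fst)

section SMDP

variable {S A : Type*} [Fintype S] [Fintype A] [Nonempty A]

def expectedMaxQ (p : S × A × S → ℝ) (q : S × A → ℝ) : S × A → ℝ :=
  fun sa => ∑ s' : S, p (sa.1, sa.2, s') * univ.sup' univ_nonempty fun a' : A => q (s', a')

theorem expectedMaxQ_smul (p : S × A × S → ℝ) {c : ℝ} (hc : 0 ≤ c) (q : S × A → ℝ) :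
    expectedMaxQ p (c • q) = c • expectedMaxQ p q := by
  funext sa
  simp only [expectedMaxQ, Pi.smul_apply, smul_eq_mul, ← mul₀_sup' hc, Finset.mul_sum]
  exact sum_congr rfl fun _ _ => mul_left_comm _ _ _

theorem continuous_expectedMaxQ (p : S × A × S → ℝ) : Continuous (expectedMaxQ p) :=
  continuous_pi fun _ => continuous_finsetSum _ fun _ _ => continuous_const.mul <|
    Continuous.finset_sup'_apply _ fun _ _ => continuous_apply _

def smdpBellman (p : S × A × S → ℝ) (t r : S × A → ℝ) (f : (S × A → ℝ) → ℝ)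
    (q : S × A → ℝ) : S × A → ℝ :=
  r - f q • t + expectedMaxQ p q

theorem isFixedPt_smdpBellman_iff {p : S × A × S → ℝ} {t r : S × A → ℝ}
    {f : (S × A → ℝ) → ℝ} {q : S × A → ℝ} :
    Function.IsFixedPt (smdpBellman p t r f) q ↔ ∀ s a, q (s, a) = r (s, a) - t (s, a) * f q +
      ∑ s' : S, p (s, a, s') * (univ.sup' univ_nonempty fun a' : A => q (s', a')) := by
  simp only [Function.IsFixedPt, funext_iff, Prod.forall, eq_comm (b := q _)]
  simp [smdpBellman, expectedMaxQ, mul_comm]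

theorem tendsto_rescale_smdpBellman (p : S × A × S → ℝ) (t r : S × A → ℝ)
    {f finf : (S × A → ℝ) → ℝ} {K : NNReal} (hf : LipschitzWith K f) {v : S × A → ℝ}
    (hv : Tendsto (fun c : ℝ => f (c • v) / c) atTop (𝓝 (finf v))) :
    Tendsto (fun x : ℝ × (S × A → ℝ) => x.1⁻¹ • smdpBellman p t r f (x.1 • x.2))
      (atTop ×ˢ 𝓝 v) (𝓝 (smdpBellman p t 0 finf v)) := by
  have hrescale : ∀ᶠ x : ℝ × (S × A → ℝ) in atTop ×ˢ 𝓝 v,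
      x.1⁻¹ • r - (f (x.1 • x.2) / x.1) • t + expectedMaxQ p x.2 =
        x.1⁻¹ • smdpBellman p t r f (x.1 • x.2) := by
    filter_upwards [tendsto_fst.eventually (eventually_gt_atTop 0)] with ⟨c, u⟩ hc
    simp only [smdpBellman, expectedMaxQ_smul p hc.le, smul_add, smul_sub, smul_smul,
      inv_mul_cancel₀ hc.ne', one_smul, div_eq_inv_mul]
  refine Tendsto.congr' hrescale ?_
  have := (((tendsto_inv_atTop_zero.comp tendsto_fst).smul_const r).sub
    ((hf.tendsto_div_comp_smul hv).smul_const t)).add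
    ((continuous_expectedMaxQ p).continuousAt.tendsto.comp tendsto_snd)
  simpa [smdpBellman] using this

end SMDP

theorem stmt4_general (S A : Type*) [Fintype S] [Fintype A] [Nonempty A]
    (p : S × A × S → ℝ) (t r : S × A → ℝ)
    (f finf : (S × A → ℝ) → ℝ)
    (hLip : ∃ K : NNReal, LipschitzWith K f)
    -- the pointwise scaling limit `f_∞` exists
    (hlim : ∀ q : S × A → ℝ,
      Filter.Tendsto (fun c : ℝ => f (c • q) / c) Filter.atTop (nhds (finf q)))
    -- `q = 0` is the only solution of the `f_∞`-equation with zero rewards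
    (huniq : ∀ q : S × A → ℝ,
      (∀ s a, q (s, a) = - t (s, a) * finf q +
        ∑ s' : S, p (s, a, s') *
          (Finset.univ.sup' Finset.univ_nonempty fun a' : A => q (s', a'))) →
      q = 0) :
    Bornology.IsBounded {q : S × A → ℝ |
      ∀ s a, q (s, a) = r (s, a) - t (s, a) * f q +
        ∑ s' : S, p (s, a, s') *
          (Finset.univ.sup' Finset.univ_nonempty fun a' : A => q (s', a'))} := by
  obtain ⟨K, hK⟩ := hLip
  have hbounded := isBounded_fixedPoints_of_tendsto_rescale
    (fun v => tendsto_rescale_smdpBellman p t r hK (hlim v))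
    fun v hv => huniq v <| by simpa using isFixedPt_smdpBellman_iff.1 hv
  exact hbounded.subset fun q hq => isFixedPt_smdpBellman_iff.2 hq

theorem stmt4 (S A : Type*) [Fintype S] [Fintype A] [Nonempty S] [Nonempty A]
    (p : S × A × S → ℝ) (t r : S × A → ℝ)
    (hp : ∀ s a s', 0 ≤ p (s, a, s'))
    (hp1 : ∀ s a, ∑ s' : S, p (s, a, s') = 1)
    (ht : ∀ s a, 0 < t (s, a))
    (f finf : (S × A → ℝ) → ℝ)
    (hLip : ∃ K : NNReal, LipschitzWith K f)
    -- the pointwise scaling limit `f_∞` exists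
    (hlim : ∀ q : S × A → ℝ,
      Filter.Tendsto (fun c : ℝ => f (c • q) / c) Filter.atTop (nhds (finf q)))
    -- `q = 0` is the only solution of the `f_∞`-equation with zero rewards
    (huniq : ∀ q : S × A → ℝ,
      (∀ s a, q (s, a) = - t (s, a) * finf q +
        ∑ s' : S, p (s, a, s') *
          (Finset.univ.sup' Finset.univ_nonempty fun a' : A => q (s', a'))) →
      q = 0) :
    Bornology.IsBounded {q : S × A → ℝ |
      ∀ s a, q (s, a) = r (s, a) - t (s, a) * f q +
        ∑ s' : S, p (s, a, s') *
          (Finset.univ.sup' Finset.univ_nonempty fun a' : A => q (s', a'))} :=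
  stmt4_general S A p t r f finf hLip hlim huniq
end

section
/- Let h : ℝ^d → ℝ^m be Lipschitz continuous with Lipschitz constant L, and suppose that for every x ∈ ℝ^d the limit h_∞(x) := lim_{c→∞} h(cx)/c exists. Then: (1) h_∞ is Lipschitz continuous with constant L; (2) h_∞ is positively homogeneous, i.e., h_∞(a·x) = a·h_∞(x) for all a ≥ 0 and x (in particular h_∞(0) = 0); and (3) the functions x ↦ h(cx)/c converge to h_∞ uniformly on every compact subset of ℝ^d as c → ∞. -/
theorem stmt7 (d m : ℕ) (h hinf : (Fin d → ℝ) → Fin m → ℝ) (L : NNReal)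
    (hLip : LipschitzWith L h)
    (hlim : ∀ x : Fin d → ℝ,
      Filter.Tendsto (fun c : ℝ => c⁻¹ • h (c • x)) Filter.atTop (nhds (hinf x))) :
    -- (1) `h∞` is Lipschitz with the same constant
    LipschitzWith L hinf ∧
    -- (2) `h∞` is positively homogeneous (in particular `h∞ 0 = 0`)
    ((∀ a : ℝ, 0 ≤ a → ∀ x : Fin d → ℝ, hinf (a • x) = a • hinf x) ∧ hinf 0 = 0) ∧
    -- (3) the convergence is uniform on compact sets
    (∀ K : Set (Fin d → ℝ), IsCompact K →
      TendstoUniformlyOn (fun (c : ℝ) (x : Fin d → ℝ) => c⁻¹ • h (c • x)) hinf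
        Filter.atTop K) := by
  -- each member of the family is `L`-Lipschitz
  have glip : ∀ c : ℝ, LipschitzWith L (fun x => c⁻¹ • h (c • x)) := by
    intro c
    rcases eq_or_ne c 0 with rfl | hc
    · apply LipschitzWith.of_dist_le_mul
      intro x y
      simp
      positivity
    · apply LipschitzWith.of_dist_le_mul
      intro x y
      calc dist (c⁻¹ • h (c • x)) (c⁻¹ • h (c • y))
          = ‖c⁻¹‖ * dist (h (c • x)) (h (c • y)) := dist_smul₀ _ _ _
        _ ≤ ‖c⁻¹‖ * ((L : ℝ) * dist (c • x) (c • y)) := by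
            have := hLip.dist_le_mul (c • x) (c • y)
            have h0 : (0:ℝ) ≤ ‖c⁻¹‖ := norm_nonneg _
            nlinarith [this, h0]
        _ = ‖c⁻¹‖ * ((L : ℝ) * (‖c‖ * dist x y)) := by rw [dist_smul₀]
        _ = (L : ℝ) * dist x y := by
            rw [norm_inv]
            field_simp
  -- `hinf 0 = 0`
  have h0 : hinf 0 = 0 := by
    have t1 : Filter.Tendsto (fun c : ℝ => c⁻¹ • h (c • (0 : Fin d → ℝ)))
        Filter.atTop (nhds 0) := by
      simp only [smul_zero]
      have := (tendsto_inv_atTop_zero (𝕜 := ℝ)).smul_const (h 0)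
      simpa using this
    exact tendsto_nhds_unique (hlim 0) t1
  refine ⟨?_, ⟨?_, h0⟩, ?_⟩
  · -- (1)
    apply LipschitzWith.of_dist_le_mul
    intro x y
    have t : Filter.Tendsto (fun c : ℝ => dist (c⁻¹ • h (c • x)) (c⁻¹ • h (c • y)))
        Filter.atTop (nhds (dist (hinf x) (hinf y))) := (hlim x).dist (hlim y)
    exact le_of_tendsto t (Filter.Eventually.of_forall fun c => (glip c).dist_le_mul x y)
  · -- (2)
    intro a ha x
    rcases eq_or_lt_of_le ha with rfl | hapos
    · simpa using h0
    · have hmul : Filter.Tendsto (fun c : ℝ => c * a) Filter.atTop Filter.atTop :=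
        Filter.Tendsto.atTop_mul_const hapos Filter.tendsto_id
      have t1 : Filter.Tendsto (fun c : ℝ => a • ((c * a)⁻¹ • h ((c * a) • x)))
          Filter.atTop (nhds (a • hinf x)) :=
        ((hlim x).comp hmul).const_smul a
      have heq : (fun c : ℝ => a • ((c * a)⁻¹ • h ((c * a) • x)))
          = fun c : ℝ => c⁻¹ • h (c • (a • x)) := by
        funext c
        rw [smul_smul, smul_smul, mul_inv]
        congr 1
        rcases eq_or_ne c 0 with rfl | hc
        · simp
        · field_simp
      rw [heq] at t1
      exact tendsto_nhds_unique (hlim (a • x)) t1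
  · -- (3)
    intro K hK
    have : CompactSpace K := isCompact_iff_compactSpace.mp hK
    rw [tendstoUniformlyOn_iff_tendstoUniformly_comp_coe]
    set F : ℝ → K → (Fin m → ℝ) := fun c x => c⁻¹ • h (c • (x : Fin d → ℝ)) with hF
    have heq : Equicontinuous F := by
      rw [show F = Set.domRestrict K ∘ (fun c x => c⁻¹ • h (c • x)) from rfl,
        equicontinuous_restrict_iff]
      have hue : UniformEquicontinuous (fun (c : ℝ) (x : Fin d → ℝ) => c⁻¹ • h (c • x)) := by
        apply Metric.uniformEquicontinuous_of_continuity_modulus (fun t => (L : ℝ) * t)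
        · have : Filter.Tendsto (fun t : ℝ => (L : ℝ) * t) (nhds 0) (nhds ((L : ℝ) * 0)) :=
            (continuous_const.mul continuous_id).tendsto 0
          simpa using this
        · exact fun x y c => (glip c).dist_le_mul x y
      exact hue.equicontinuous.equicontinuousOn K
    have hpt : Filter.Tendsto F Filter.atTop (nhds (K.restrict hinf)) := by
      rw [tendsto_pi_nhds]
      exact fun x => hlim x
    have := (heq.tendsto_uniformFun_iff_pi Filter.atTop (K.restrict hinf)).mpr hpt
    exact UniformFun.tendsto_iff_tendstoUniformly.mp this
end

section
/- There exists a function f : ℝ² → ℝ such that: f is Lipschitz continuous; f is SISTr; the pointwise scaling limit f_∞(x) := lim_{c→∞} f(cx)/c exists for every x ∈ ℝ²; f_∞ is SISTr at the origin; and yet f_∞ is not SISTr at every point, i.e., there exist x̄ ∈ ℝ² and real numbers c₁ < c₂ with f_∞(x̄ + c₁·𝟏) = f_∞(x̄ + c₂·𝟏). -/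
open Real Filter

noncomputable def myf (x : Fin 2 → ℝ) : ℝ :=
  min (x 0) (max (x 1) (x 0 - x 1 + Real.arctan (x 0 + x 1)))

noncomputable def myfinf (x : Fin 2 → ℝ) : ℝ :=
  min (x 0) (max (x 1) (x 0 - x 1))

lemma arctan_lip : LipschitzWith 1 Real.arctan := by
  apply lipschitzWith_of_nnnorm_deriv_le Real.differentiable_arctan
  intro x
  have h : ‖deriv Real.arctan x‖ ≤ (1 : ℝ) := by
    rw [Real.deriv_arctan]
    have h1 : (0:ℝ) < 1 + x ^ 2 := by positivity
    rw [Real.norm_eq_abs, abs_of_nonneg (by positivity)]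
    rw [div_le_one h1]
    nlinarith [sq_nonneg x]
  exact_mod_cast h

lemma eval_add_smul (x : Fin 2 → ℝ) (c : ℝ) (i : Fin 2) :
    (x + c • (1 : Fin 2 → ℝ)) i = x i + c := by
  simp

theorem stmt9 :
    ∃ f finf : (Fin 2 → ℝ) → ℝ,
      (∃ K : NNReal, LipschitzWith K f) ∧
      SISTr f ∧
      (∀ x : Fin 2 → ℝ,
        Filter.Tendsto (fun c : ℝ => f (c • x) / c) Filter.atTop (nhds (finf x))) ∧
      SISTrAt finf 0 ∧
      ∃ (xbar : Fin 2 → ℝ) (c₁ c₂ : ℝ), c₁ < c₂ ∧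
        finf (xbar + c₁ • (1 : Fin 2 → ℝ)) = finf (xbar + c₂ • (1 : Fin 2 → ℝ)) := by
  refine ⟨myf, myfinf, ?_, ?_, ?_, ?_, ?_⟩
  · -- Lipschitz
    exact ⟨_, by
      unfold myf
      exact (LipschitzWith.eval 0).min ((LipschitzWith.eval 1).max
        (((LipschitzWith.eval 0).sub (LipschitzWith.eval 1)).add
          (arctan_lip.comp ((LipschitzWith.eval 0).add (LipschitzWith.eval 1)))))⟩
  · -- SISTr f
    intro x
    have key : ∀ c : ℝ, myf (x + c • (1 : Fin 2 → ℝ)) =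
        min (x 0 + c) (max (x 1 + c) (x 0 - x 1 + Real.arctan (x 0 + x 1 + 2 * c))) := by
      intro c
      simp only [myf, eval_add_smul]
      have h1 : x 0 + c - (x 1 + c) = x 0 - x 1 := by ring
      have h2 : x 0 + c + (x 1 + c) = x 0 + x 1 + 2 * c := by ring
      rw [h1, h2]
    have hmono : StrictMono (fun c : ℝ => myf (x + c • (1 : Fin 2 → ℝ))) := by
      intro a b h
      simp only [key]
      apply min_lt_min (by linarith)
      apply max_lt_max (by linarith)
      exact (add_lt_add_iff_left _).2 (Real.arctan_strictMono (by linarith))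
    refine ⟨hmono, ?_⟩
    have hcont : Continuous (fun c : ℝ => myf (x + c • (1 : Fin 2 → ℝ))) := by
      simp only [key]
      refine Continuous.min (by fun_prop) (Continuous.max (by fun_prop) ?_)
      exact continuous_const.add (Real.continuous_arctan.comp (by fun_prop))
    apply hcont.surjective
    · -- atTop
      apply tendsto_atTop_mono (f := fun c : ℝ => min (x 0) (x 1) + c)
      · intro c
        rw [key]
        exact le_min (show min (x 0) (x 1) + c ≤ x 0 + c by linarith [min_le_left (x 0) (x 1)])
          (le_trans (show min (x 0) (x 1) + c ≤ x 1 + c by linarith [min_le_right (x 0) (x 1)]) (le_max_left _ _))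
      · exact tendsto_atTop_add_const_left _ _ tendsto_id
    · -- atBot
      apply tendsto_atBot_mono (f := fun c : ℝ => x 0 + c)
      · intro c
        rw [key]
        exact min_le_left _ _
      · exact tendsto_atBot_add_const_left _ _ tendsto_id
  · -- scaling limit
    intro x
    have hlim : Tendsto (fun c : ℝ => Real.arctan (c * (x 0 + x 1)) / c) atTop (nhds 0) := by
      have hb : Tendsto (fun c : ℝ => (π / 2) / c) atTop (nhds 0) :=
        tendsto_const_nhds.div_atTop tendsto_id
      refine squeeze_zero_norm' ?_ hb
      filter_upwards [eventually_gt_atTop 0] with c hc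
      rw [Real.norm_eq_abs, abs_div, abs_of_pos hc]
      gcongr
      exact abs_le.2 ⟨(Real.neg_pi_div_two_lt_arctan _).le, (Real.arctan_lt_pi_div_two _).le⟩
    have hG : Tendsto (fun c : ℝ =>
        min (x 0) (max (x 1) (x 0 - x 1 + Real.arctan (c * (x 0 + x 1)) / c)))
        atTop (nhds (myfinf x)) := by
      have hval : myfinf x = min (x 0) (max (x 1) (x 0 - x 1 + 0)) := by
        simp [myfinf]
      rw [hval]
      exact tendsto_const_nhds.min (tendsto_const_nhds.max (tendsto_const_nhds.add hlim))
    apply Tendsto.congr' _ hG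
    filter_upwards [eventually_gt_atTop 0] with c hc
    have hc' : c ≠ 0 := ne_of_gt hc
    simp only [myf, Pi.smul_apply, smul_eq_mul]
    rw [← min_div_div_right hc.le, ← max_div_div_right hc.le]
    have e0 : c * x 0 / c = x 0 := by field_simp
    have e1 : c * x 1 / c = x 1 := by field_simp
    have e2 : (c * x 0 - c * x 1 + Real.arctan (c * x 0 + c * x 1)) / c
        = x 0 - x 1 + Real.arctan (c * (x 0 + x 1)) / c := by
      rw [add_div]
      have h3 : c * x 0 + c * x 1 = c * (x 0 + x 1) := by ring
      rw [h3]
      congr 1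
      field_simp
    rw [e0, e1, e2]
  · -- SISTrAt finf 0
    have key : ∀ c : ℝ, myfinf ((0 : Fin 2 → ℝ) + c • (1 : Fin 2 → ℝ)) = c := by
      intro c
      simp only [myfinf, eval_add_smul, Pi.zero_apply, zero_add, sub_self]
      exact min_eq_left (le_max_left _ _)
    constructor
    · intro a b h; simp only [key]; exact h
    · intro b; exact ⟨b, key b⟩
  · -- counterexample
    refine ⟨![10, 0], 0, 1, one_pos, ?_⟩
    simp only [myfinf, eval_add_smul]
    norm_num
end

section
/- Let T : ℝ^d → ℝ^d satisfy T(q + c·𝟏) = T(q) + c·𝟏 for all q and c, let f : ℝ^d → ℝ be Lipschitz continuous, and let ᾱ > 0, r* ∈ ℝ. Let y : ℝ → ℝ^d be differentiable with y'(t) = T(y(t)) − y(t) − ᾱ·r*·𝟏 for all t. Then there exists a differentiable function z : ℝ → ℝ with z(0) = 0 and z'(t) = ᾱ·r* − ᾱ·f(y(t) + z(t)·𝟏) for all t ∈ ℝ; any two such functions coincide on all of ℝ; and the function x(t) := y(t) + z(t)·𝟏 satisfies x'(t) = T(x(t)) − x(t) − ᾱ·f(x(t))·𝟏 for all t. -/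
open Set intervalIntegral MeasureTheory Function

open Set intervalIntegral MeasureTheory

lemma abs_int_abs_pow_le (k : ℕ) (t : ℝ) :
    |∫ s in (0:ℝ)..t, |s| ^ k| ≤ |t| ^ (k + 1) / (k + 1) := by
  rcases le_total 0 t with ht | ht
  · have : ∫ s in (0:ℝ)..t, |s| ^ k = ∫ s in (0:ℝ)..t, s ^ k := by
      apply intervalIntegral.integral_congr
      intro s hs
      rw [uIcc_of_le ht] at hs
      simp only [abs_of_nonneg hs.1]
    rw [this, integral_pow, abs_of_nonneg ht]
    rw [zero_pow (Nat.succ_ne_zero k), sub_zero]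
    rw [abs_div, abs_of_nonneg (by positivity : (0:ℝ) ≤ t^(k+1)),
      abs_of_nonneg (by positivity : (0:ℝ) ≤ (k:ℝ)+1)]
  · have h1 : ∫ s in (0:ℝ)..t, |s| ^ k = ∫ s in (0:ℝ)..t, |(-s)| ^ k := by
      simp
    have h2 : (∫ s in (0:ℝ)..t, |(-s)| ^ k) = ∫ s in (-t)..(-0:ℝ), |s| ^ k := by
      exact intervalIntegral.integral_comp_neg (fun s => |s| ^ k)
    have h3 : (∫ s in (-t)..(-0:ℝ), |s| ^ k) = ∫ s in (-t)..(0:ℝ), |s| ^ k := by norm_num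
    have h4 : (∫ s in (-t)..(0:ℝ), |s| ^ k) = -∫ s in (0:ℝ)..(-t), |s| ^ k := by
      rw [intervalIntegral.integral_symm]
    have h5 : ∫ s in (0:ℝ)..(-t), |s| ^ k = ∫ s in (0:ℝ)..(-t), s ^ k := by
      apply intervalIntegral.integral_congr
      intro s hs
      rw [uIcc_of_le (by linarith)] at hs
      simp only [abs_of_nonneg hs.1]
    rw [h1, h2, h3, h4, h5, integral_pow, abs_neg, abs_of_nonpos ht]
    rw [zero_pow (Nat.succ_ne_zero k), sub_zero]
    rw [abs_div, abs_of_nonneg (pow_nonneg (by linarith) (k+1)),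
      abs_of_nonneg (by positivity : (0:ℝ) ≤ (k:ℝ)+1)]

lemma exists_picard_solution {g : ℝ → ℝ → ℝ} (L : NNReal)
    (hgl : ∀ t, LipschitzWith L (g t))
    (hgc : Continuous fun p : ℝ × ℝ => g p.1 p.2)
    (b : ℝ) (hb0 : 0 < b) :
    ∃ Z : ℝ → ℝ, Z 0 = 0 ∧ ∀ t ∈ Ioo (-b) b, HasDerivAt Z (g t (Z t)) t := by
  have hb : (-b) ≤ b := by linarith
  have hext : ∀ u : C(Icc (-b) b, ℝ), Continuous (IccExtend hb u) :=
    fun u => u.continuous.Icc_extend'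
  have hFc : ∀ u : C(Icc (-b) b, ℝ), Continuous (fun s => g s (IccExtend hb u s)) :=
    fun u => hgc.comp (continuous_id.prodMk (hext u))
  have hQd : ∀ (u : C(Icc (-b) b, ℝ)) (t : ℝ),
      HasDerivAt (fun τ => ∫ s in (0:ℝ)..τ, g s (IccExtend hb u s))
        (g t (IccExtend hb u t)) t :=
    fun u t => ((hFc u).integral_hasStrictDerivAt 0 t).hasDerivAt
  set Q : C(Icc (-b) b, ℝ) → C(Icc (-b) b, ℝ) := fun u =>
    ⟨fun t => ∫ s in (0:ℝ)..(t:ℝ), g s (IccExtend hb u s),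
      (continuous_iff_continuousAt.2 fun t =>
        (hQd u t).continuousAt).comp continuous_subtype_val⟩ with hQdef
  have hQcoe : ∀ (u : C(Icc (-b) b, ℝ)) (t : Icc (-b) b),
      Q u t = ∫ s in (0:ℝ)..(t:ℝ), g s (IccExtend hb u s) := fun _ _ => rfl
  have hsub : ∀ (t : Icc (-b) b), ∀ s ∈ Set.uIoc (0:ℝ) (t:ℝ), s ∈ Icc (-b) b := by
    intro t s hs
    rcases mem_uIoc.1 hs with h | h
    · exact ⟨by linarith [h.1], le_trans h.2 t.2.2⟩
    · exact ⟨le_trans t.2.1 h.1.le, by linarith [h.2]⟩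
  -- key iterated estimate
  have key : ∀ (k : ℕ) (u v : C(Icc (-b) b, ℝ)) (t : Icc (-b) b),
      dist ((Q^[k] u) t) ((Q^[k] v) t)
        ≤ dist u v * (L:ℝ) ^ k * |(t:ℝ)| ^ k / (Nat.factorial k) := by
    intro k
    induction k with
    | zero =>
      intro u v t
      simpa using ContinuousMap.dist_apply_le_dist (f := u) (g := v) t
    | succ k ih =>
      intro u v t
      rw [Function.iterate_succ_apply', Function.iterate_succ_apply']
      set U := Q^[k] u with hU
      set V := Q^[k] v with hV
      have hdiff : (Q U) t - (Q V) t
          = ∫ s in (0:ℝ)..(t:ℝ),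
              (g s (IccExtend hb U s) - g s (IccExtend hb V s)) := by
        rw [hQcoe, hQcoe,
          intervalIntegral.integral_sub ((hFc U).intervalIntegrable _ _)
            ((hFc V).intervalIntegrable _ _)]
      set C : ℝ := dist u v * (L:ℝ) ^ (k+1) / (Nat.factorial k) with hC
      have hC0 : 0 ≤ C := by positivity
      have hbd : ∀ s ∈ Set.uIoc (0:ℝ) (t:ℝ),
          ‖g s (IccExtend hb U s) - g s (IccExtend hb V s)‖ ≤ C * |s| ^ k := by
        intro s hs
        have hsI : s ∈ Icc (-b) b := hsub t s hs
        rw [IccExtend_of_mem hb U hsI, IccExtend_of_mem hb V hsI]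
        have h1 : dist (g s (U ⟨s, hsI⟩)) (g s (V ⟨s, hsI⟩))
            ≤ (L:ℝ) * dist (U ⟨s, hsI⟩) (V ⟨s, hsI⟩) := (hgl s).dist_le_mul _ _
        have h2 := ih u v ⟨s, hsI⟩
        rw [← hU, ← hV] at h2
        have : dist (g s (U ⟨s, hsI⟩)) (g s (V ⟨s, hsI⟩))
            ≤ (L:ℝ) * (dist u v * (L:ℝ) ^ k * |s| ^ k / (Nat.factorial k)) :=
          le_trans h1 (mul_le_mul_of_nonneg_left h2 L.coe_nonneg)
        rw [Real.dist_eq] at this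
        rw [Real.norm_eq_abs]
        calc |g s (U ⟨s, hsI⟩) - g s (V ⟨s, hsI⟩)|
            ≤ (L:ℝ) * (dist u v * (L:ℝ) ^ k * |s| ^ k / (Nat.factorial k)) := this
          _ = C * |s| ^ k := by rw [hC]; ring
      have hintbd : IntervalIntegrable (fun s => C * |s| ^ k) volume 0 (t:ℝ) :=
        ((continuous_const.mul (continuous_abs.pow k)).intervalIntegrable) _ _
      have hstep : ‖(Q U) t - (Q V) t‖ ≤ |∫ s in (0:ℝ)..(t:ℝ), C * |s| ^ k| := by
        rw [hdiff]
        apply intervalIntegral.norm_integral_le_abs_of_norm_le _ hintbd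
        exact (ae_restrict_iff' measurableSet_uIoc).2 (ae_of_all _ hbd)
      have hval : |∫ s in (0:ℝ)..(t:ℝ), C * |s| ^ k|
          ≤ C * (|(t:ℝ)| ^ (k+1) / (k+1)) := by
        rw [intervalIntegral.integral_const_mul, abs_mul, abs_of_nonneg hC0]
        exact mul_le_mul_of_nonneg_left (abs_int_abs_pow_le k t) hC0
      have hfin : C * (|(t:ℝ)| ^ (k+1) / (k+1))
          = dist u v * (L:ℝ) ^ (k+1) * |(t:ℝ)| ^ (k+1) / (Nat.factorial (k+1)) := by
        rw [hC, div_mul_div_comm, Nat.factorial_succ]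
        push_cast
        ring_nf
      rw [Real.dist_eq, ← Real.norm_eq_abs]
      calc ‖(Q U) t - (Q V) t‖ ≤ |∫ s in (0:ℝ)..(t:ℝ), C * |s| ^ k| := hstep
        _ ≤ C * (|(t:ℝ)| ^ (k+1) / (k+1)) := hval
        _ = _ := hfin
  -- sup-norm contraction estimate for the iterate
  have hLb : ∀ (k : ℕ) (u v : C(Icc (-b) b, ℝ)),
      dist (Q^[k] u) (Q^[k] v) ≤ (((L:ℝ)*b) ^ k / (Nat.factorial k)) * dist u v := by
    intro k u v
    refine (ContinuousMap.dist_le (by positivity)).2 fun t => ?_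
    have htb : |(t:ℝ)| ≤ b := abs_le.2 ⟨t.2.1, t.2.2⟩
    calc dist ((Q^[k] u) t) ((Q^[k] v) t)
        ≤ dist u v * (L:ℝ) ^ k * |(t:ℝ)| ^ k / (Nat.factorial k) := key k u v t
      _ ≤ dist u v * (L:ℝ) ^ k * b ^ k / (Nat.factorial k) := by
          gcongr
      _ = (((L:ℝ)*b) ^ k / (Nat.factorial k)) * dist u v := by ring
  -- choose k making the iterate a contraction
  obtain ⟨k, hk⟩ := ((FloorSemiring.tendsto_pow_div_factorial_atTop ((L:ℝ)*b)).eventually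
    (gt_mem_nhds (by norm_num : (0:ℝ) < 1/2))).exists
  have hcontr : ContractingWith (1/2 : NNReal) (Q^[k]) := by
    constructor
    · exact one_half_lt_one
    · apply LipschitzWith.of_dist_le_mul
      intro u v
      calc dist (Q^[k] u) (Q^[k] v)
          ≤ (((L:ℝ)*b) ^ k / (Nat.factorial k)) * dist u v := hLb k u v
        _ ≤ ((1/2 : NNReal) : ℝ) * dist u v := by
            apply mul_le_mul_of_nonneg_right _ dist_nonneg
            push_cast
            exact hk.le
  haveI : Nonempty C(Icc (-b) b, ℝ) := ⟨0⟩
  set u₀ := hcontr.fixedPoint (Q^[k]) with hu₀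
  have hfix : Q u₀ = u₀ := hcontr.isFixedPt_fixedPoint_iterate
  refine ⟨fun t => ∫ s in (0:ℝ)..t, g s (IccExtend hb u₀ s), by simp, ?_⟩
  intro t ht
  have htI : t ∈ Icc (-b) b := Ioo_subset_Icc_self ht
  have hZt : (∫ s in (0:ℝ)..t, g s (IccExtend hb u₀ s)) = u₀ ⟨t, htI⟩ := by
    have := congrFun (congrArg DFunLike.coe hfix) ⟨t, htI⟩
    rw [hQcoe] at this
    exact this
  have := hQd u₀ t
  rwa [IccExtend_of_mem hb u₀ htI, ← hZt] at this

theorem stmt11 (d : ℕ) (T : (Fin d → ℝ) → Fin d → ℝ)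
    (hT : ∀ (q : Fin d → ℝ) (c : ℝ),
      T (q + c • (1 : Fin d → ℝ)) = T q + c • (1 : Fin d → ℝ))
    (f : (Fin d → ℝ) → ℝ) (hLip : ∃ K : NNReal, LipschitzWith K f)
    (abar rstar : ℝ) (habar : 0 < abar)
    (y : ℝ → Fin d → ℝ)
    (hy : ∀ s : ℝ, HasDerivAt y (T (y s) - y s - (abar * rstar) • (1 : Fin d → ℝ)) s) :
    ∃ z : ℝ → ℝ, z 0 = 0 ∧
      (∀ s : ℝ, HasDerivAt z
        (abar * rstar - abar * f (y s + z s • (1 : Fin d → ℝ))) s) ∧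
      -- any two such functions coincide
      (∀ z' : ℝ → ℝ, z' 0 = 0 →
        (∀ s : ℝ, HasDerivAt z'
          (abar * rstar - abar * f (y s + z' s • (1 : Fin d → ℝ))) s) → z' = z) ∧
      -- `x = y + z·𝟏` solves the ODE for `h`
      (∀ s : ℝ, HasDerivAt (fun τ : ℝ => y τ + z τ • (1 : Fin d → ℝ))
        (T (y s + z s • (1 : Fin d → ℝ)) - (y s + z s • (1 : Fin d → ℝ))
          - (abar * f (y s + z s • (1 : Fin d → ℝ))) • (1 : Fin d → ℝ)) s) := by
  obtain ⟨K, hK⟩ := hLip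
  set g : ℝ → ℝ → ℝ :=
    fun t u => abar * rstar - abar * f (y t + u • (1 : Fin d → ℝ)) with hg
  set L : NNReal := ⟨abar, habar.le⟩ * K with hL
  have hone : ‖(1 : Fin d → ℝ)‖ ≤ 1 := by
    apply (pi_norm_le_iff_of_nonneg zero_le_one).mpr
    intro i
    simp
  have hgl : ∀ t, LipschitzWith L (g t) := by
    intro t
    apply LipschitzWith.of_dist_le_mul
    intro u v
    have h1 : dist (g t u) (g t v)
        = abar * dist (f (y t + u • (1 : Fin d → ℝ))) (f (y t + v • (1 : Fin d → ℝ))) := by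
      rw [Real.dist_eq, Real.dist_eq, ← abs_of_pos habar, ← abs_mul, ← abs_neg]
      congr 1
      simp only [hg]
      ring
    have h2 : dist (f (y t + u • (1 : Fin d → ℝ))) (f (y t + v • (1 : Fin d → ℝ)))
        ≤ K * dist u v := by
      refine le_trans (hK.dist_le_mul _ _) ?_
      have h3 : dist (y t + u • (1 : Fin d → ℝ)) (y t + v • (1 : Fin d → ℝ))
          = ‖(u - v) • (1 : Fin d → ℝ)‖ := by
        rw [dist_eq_norm]
        congr 1
        rw [sub_smul]
        abel
      rw [h3]
      refine mul_le_mul_of_nonneg_left ?_ K.coe_nonneg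
      calc ‖(u - v) • (1 : Fin d → ℝ)‖ ≤ ‖u - v‖ * ‖(1 : Fin d → ℝ)‖ := norm_smul_le _ _
        _ ≤ ‖u - v‖ * 1 := by
            exact mul_le_mul_of_nonneg_left hone (norm_nonneg _)
        _ = dist u v := by rw [mul_one, Real.dist_eq, Real.norm_eq_abs]
    calc dist (g t u) (g t v) ≤ abar * ((K : ℝ) * dist u v) := by
          rw [h1]; exact mul_le_mul_of_nonneg_left h2 habar.le
      _ = (L : ℝ) * dist u v := by
          rw [hL]
          push_cast
          show abar * ((K:ℝ) * dist u v) = (abar * (K:ℝ)) * dist u v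
          ring
  have hyc : Continuous y := by
    apply continuous_iff_continuousAt.2
    intro t
    exact (hy t).differentiableAt.continuousAt
  have hgc : Continuous fun p : ℝ × ℝ => g p.1 p.2 := by
    apply Continuous.sub continuous_const
    apply continuous_const.mul
    exact hK.continuous.comp
      ((hyc.comp continuous_fst).add (continuous_snd.smul continuous_const))
  -- solutions on each interval `Ioo (-(n+1)) (n+1)`
  have hexist : ∀ n : ℕ, ∃ Z : ℝ → ℝ, Z 0 = 0 ∧
      ∀ t ∈ Set.Ioo (-((n:ℝ)+1)) ((n:ℝ)+1), HasDerivAt Z (g t (Z t)) t :=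
    fun n => exists_picard_solution L hgl hgc ((n:ℝ)+1) (by positivity)
  choose Z hZ0 hZd using hexist
  -- uniqueness on symmetric open intervals
  have huniq : ∀ (w w' : ℝ → ℝ) (c : ℝ), 0 < c → w 0 = w' 0 →
      (∀ t ∈ Set.Ioo (-c) c, HasDerivAt w (g t (w t)) t) →
      (∀ t ∈ Set.Ioo (-c) c, HasDerivAt w' (g t (w' t)) t) →
      ∀ t ∈ Set.Ioo (-c) c, w t = w' t := by
    intro w w' c hc h0 hw hw'
    exact ODE_solution_unique_of_mem_Ioo (v := g) (s := fun _ => Set.univ)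
      (fun t _ => (hgl t).lipschitzOnWith) ⟨neg_lt_zero.2 hc, hc⟩
      (fun t ht => ⟨hw t ht, trivial⟩) (fun t ht => ⟨hw' t ht, trivial⟩) h0
  have hcons : ∀ (m n : ℕ) (t : ℝ), |t| < (m:ℝ)+1 → |t| < (n:ℝ)+1 → Z m t = Z n t := by
    intro m n t hm hn
    set c : ℝ := min ((m:ℝ)+1) ((n:ℝ)+1) with hc
    have hc0 : 0 < c := lt_min (by positivity) (by positivity)
    have hsub1 : Set.Ioo (-c) c ⊆ Set.Ioo (-((m:ℝ)+1)) ((m:ℝ)+1) :=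
      Set.Ioo_subset_Ioo (neg_le_neg (min_le_left _ _)) (min_le_left _ _)
    have hsub2 : Set.Ioo (-c) c ⊆ Set.Ioo (-((n:ℝ)+1)) ((n:ℝ)+1) :=
      Set.Ioo_subset_Ioo (neg_le_neg (min_le_right _ _)) (min_le_right _ _)
    have htc : t ∈ Set.Ioo (-c) c := by
      have := abs_lt.1 (lt_min hm hn)
      exact ⟨this.1, this.2⟩
    exact huniq (Z m) (Z n) c hc0 (by rw [hZ0 m, hZ0 n])
      (fun τ hτ => hZd m τ (hsub1 hτ)) (fun τ hτ => hZd n τ (hsub2 hτ)) t htc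
  have hzder : ∀ s : ℝ, HasDerivAt (fun t => Z ⌊|t|⌋₊ t)
      (g s (Z ⌊|s|⌋₊ s)) s := by
    intro s
    set n : ℕ := ⌊|s|⌋₊ with hn
    have hsn : |s| < (n:ℝ)+1 := by
      rw [hn]; push_cast; exact Nat.lt_floor_add_one |s|
    have hsI : s ∈ Set.Ioo (-((n:ℝ)+1)) ((n:ℝ)+1) := by
      have := abs_lt.1 hsn
      exact ⟨this.1, this.2⟩
    have hd := hZd n s hsI
    have hev : Z n =ᶠ[nhds s] (fun t => Z ⌊|t|⌋₊ t) := by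
      have hopen : IsOpen {t : ℝ | |t| < (n:ℝ)+1} :=
        isOpen_lt continuous_abs continuous_const
      filter_upwards [hopen.mem_nhds hsn] with t ht
      exact (hcons ⌊|t|⌋₊ n t (by push_cast; exact Nat.lt_floor_add_one |t|) ht).symm
    have hds := hd.congr_of_eventuallyEq hev.symm
    have hzs : Z ⌊|s|⌋₊ s = Z n s := by rw [hn]
    simpa [hzs] using hds
  refine ⟨fun t => Z ⌊|t|⌋₊ t, ?_, ?_, ?_, ?_⟩
  · simp only [abs_zero, Nat.floor_zero]
    exact hZ0 0
  · exact hzder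
  · -- uniqueness
    intro z' hz'0 hz'd
    funext t
    rcases eq_or_ne t 0 with rfl | ht0
    · rw [hz'0]
      simp only [abs_zero, Nat.floor_zero]
      exact (hZ0 0).symm
    · set c : ℝ := |t| + 1 with hc
      have hc0 : 0 < c := by positivity
      have htc : t ∈ Set.Ioo (-c) c := by
        have h : |t| < c := by rw [hc]; linarith
        have := abs_lt.1 h
        exact ⟨this.1, this.2⟩
      have h0 : z' 0 = Z ⌊|(0:ℝ)|⌋₊ 0 := by
        rw [hz'0]
        simp only [abs_zero, Nat.floor_zero]
        exact (hZ0 0).symm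
      exact huniq z' (fun τ => Z ⌊|τ|⌋₊ τ) c hc0 h0
        (fun τ _ => hz'd τ) (fun τ _ => hzder τ) t htc
  · -- the combined ODE
    intro s
    have h1 := (hy s).add ((hzder s).smul_const (1 : Fin d → ℝ))
    refine h1.congr_deriv ?_
    rw [hT (y s) (Z ⌊|s|⌋₊ s)]
    funext i
    simp only [hg, Pi.add_apply, Pi.sub_apply, Pi.smul_apply, Pi.one_apply, smul_eq_mul]
    ring
end

section
/- Let f : ℝ^d → ℝ be Lipschitz continuous and SISTr, let ᾱ > 0 and r* ∈ ℝ. Let y : [0,∞) → ℝ^d be continuous with y(t) → ȳ as t → ∞, and let z : [0,∞) → ℝ be differentiable with z(0) = 0 and z'(t) = ᾱ·(r* − f(y(t) + z(t)·𝟏)) for all t ≥ 0. Then there is a unique real number c̄ with f(ȳ + c̄·𝟏) = r*, and z(t) → c̄ as t → ∞; consequently y(t) + z(t)·𝟏 → ȳ + c̄·𝟏 as t → ∞. -/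
open Set Filter

/-- If the derivative is at most `-m` on `(u,v)`, then `z v ≤ z u - m (v-u)`. -/
lemma decay_on (z F : ℝ → ℝ)
    (hz : ∀ s ∈ Set.Ici (0:ℝ), HasDerivWithinAt z (F s) (Set.Ici 0) s)
    (m u v : ℝ) (hu : 0 ≤ u) (huv : u ≤ v)
    (hF : ∀ s ∈ Set.Ioo u v, F s ≤ -m) :
    z v ≤ z u - m * (v - u) := by
  have hcont : ContinuousOn z (Set.Ici 0) := fun s hs => (hz s hs).continuousWithinAt
  set w : ℝ → ℝ := fun s => z s + m * s with hw
  have hsub : Set.Icc u v ⊆ Set.Ici (0:ℝ) := fun x hx => le_trans hu hx.1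
  have hwc : ContinuousOn w (Set.Icc u v) :=
    (hcont.mono hsub).add ((continuous_const.mul continuous_id).continuousOn)
  have hder : ∀ x ∈ Set.Ioo u v, HasDerivAt w (F x + m) x := by
    intro x hx
    have hx0 : 0 < x := lt_of_le_of_lt hu hx.1
    have h1 : HasDerivAt z (F x) x :=
      (hz x hx0.le).hasDerivAt (Ici_mem_nhds hx0)
    have h2 : HasDerivAt (fun s : ℝ => m * s) m x := by
      simpa using (hasDerivAt_id x).const_mul m
    exact h1.add h2
  have hanti : AntitoneOn w (Set.Icc u v) := by
    apply antitoneOn_of_deriv_nonpos (convex_Icc u v) hwc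
    · intro x hx
      rw [interior_Icc] at hx
      exact (hder x hx).differentiableAt.differentiableWithinAt
    · intro x hx
      rw [interior_Icc] at hx
      rw [(hder x hx).deriv]
      have := hF x hx
      linarith
  have := hanti (Set.left_mem_Icc.2 huv) (Set.right_mem_Icc.2 huv) huv
  simp only [hw] at this
  linarith

/-- Barrier lemma: if whenever `z s ≥ b` (and `s ≥ T`) the derivative is `≤ -m < 0`,
then eventually `z s ≤ b`. -/
lemma eventually_le_of_barrier (z F : ℝ → ℝ)
    (hz : ∀ s ∈ Set.Ici (0:ℝ), HasDerivWithinAt z (F s) (Set.Ici 0) s)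
    (b m T : ℝ) (hm : 0 < m) (hT : 0 ≤ T)
    (hF : ∀ s, T ≤ s → b ≤ z s → F s ≤ -m) :
    ∀ᶠ s in Filter.atTop, z s ≤ b := by
  have hcont : ContinuousOn z (Set.Ici 0) := fun s hs => (hz s hs).continuousWithinAt
  -- Step A: z eventually hits b
  have stepA : ∃ t₀, T ≤ t₀ ∧ z t₀ ≤ b := by
    by_contra h
    push_neg at h
    set X := T + (z T - b)/m + 1 with hX
    have hzT : b < z T := h T le_rfl
    have hdiv : 0 < (z T - b)/m := div_pos (by linarith) hm
    have hTX : T ≤ X := by simp only [hX]; linarith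
    have key := decay_on z F hz m T X hT hTX
      (fun s hs => hF s hs.1.le (h s hs.1.le).le)
    have hmX : m * (X - T) = z T - b + m := by
      field_simp [hX]
      rw [hX]
      have hmd : m * ((z T - b) / m) = z T - b := by field_simp [hm.ne']
      linear_combination hmd
    have := h X hTX
    linarith
  obtain ⟨t₀, ht₀T, ht₀⟩ := stepA
  have ht₀0 : 0 ≤ t₀ := le_trans hT ht₀T
  rw [Filter.eventually_atTop]
  refine ⟨t₀, fun t ht => ?_⟩
  by_contra hzt
  push_neg at hzt
  have ht₀t : t₀ < t := by
    rcases ht.lt_or_eq with h | h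
    · exact h
    · exact absurd (h ▸ ht₀) (not_le.2 hzt)
  set A := Set.Icc t₀ t ∩ z ⁻¹' Set.Iic b with hA
  have hne : t₀ ∈ A := ⟨⟨le_rfl, ht⟩, ht₀⟩
  have hbdd : BddAbove A := ⟨t, fun s hs => hs.1.2⟩
  have hclosed : IsClosed A := by
    apply ContinuousOn.preimage_isClosed_of_isClosed
      (hcont.mono (fun x hx => le_trans ht₀0 hx.1)) isClosed_Icc isClosed_Iic
  set u := sSup A with hu
  have huA : u ∈ A := hclosed.csSup_mem ⟨t₀, hne⟩ hbdd
  have hut : u < t := lt_of_le_of_ne huA.1.2 (fun e => absurd (e ▸ huA.2) (not_le.2 hzt))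
  have hu0 : 0 ≤ u := le_trans ht₀0 huA.1.1
  have hgt : ∀ s, u < s → s ≤ t → b < z s := by
    intro s hus hst
    by_contra hle
    push_neg at hle
    have : s ∈ A := ⟨⟨le_trans huA.1.1 hus.le, hst⟩, hle⟩
    exact absurd (le_csSup hbdd this) (not_le.2 hus)
  have hzu : b ≤ z u := by
    by_contra hlt
    push_neg at hlt
    have hcw : ContinuousWithinAt z (Set.Ioc u t) u :=
      (hcont u hu0).mono (fun x hx => le_trans hu0 hx.1.le)
    have hev : ∀ᶠ s in nhdsWithin u (Set.Ioc u t), z s < b :=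
      hcw.eventually_lt_const hlt
    have : (nhdsWithin u (Set.Ioc u t)).NeBot := by
      rw [nhdsWithin_Ioc_eq_nhdsGT hut]
      infer_instance
    obtain ⟨s, hs1, hs2⟩ := (eventually_mem_nhdsWithin.and hev).exists
    exact absurd (hgt s hs1.1 hs1.2) (not_lt.2 hs2.le)
  have key := decay_on z F hz m u t hu0 hut.le
    (fun s hs => hF s (le_trans (le_trans ht₀T huA.1.1) hs.1.le) (hgt s hs.1 hs.2.le).le)
  have hub : z u ≤ b := huA.2
  have : 0 ≤ m * (t - u) := mul_nonneg hm.le (by linarith)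
  linarith

theorem stmt12 (d : ℕ) (f : (Fin d → ℝ) → ℝ)
    (hLip : ∃ K : NNReal, LipschitzWith K f) (hSISTr : SISTr f)
    (abar rstar : ℝ) (habar : 0 < abar)
    (y : ℝ → Fin d → ℝ) (ybar : Fin d → ℝ)
    (hycont : ContinuousOn y (Set.Ici (0 : ℝ)))
    (hylim : Filter.Tendsto y Filter.atTop (nhds ybar))
    (z : ℝ → ℝ) (hz0 : z 0 = 0)
    (hz : ∀ s ∈ Set.Ici (0 : ℝ), HasDerivWithinAt z
      (abar * (rstar - f (y s + z s • (1 : Fin d → ℝ)))) (Set.Ici (0 : ℝ)) s) :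
    ∃ cbar : ℝ,
      f (ybar + cbar • (1 : Fin d → ℝ)) = rstar ∧
      (∀ c' : ℝ, f (ybar + c' • (1 : Fin d → ℝ)) = rstar → c' = cbar) ∧
      Filter.Tendsto z Filter.atTop (nhds cbar) ∧
      Filter.Tendsto (fun s : ℝ => y s + z s • (1 : Fin d → ℝ)) Filter.atTop
        (nhds (ybar + cbar • (1 : Fin d → ℝ))) := by
  obtain ⟨cbar, hcbar⟩ := (hSISTr ybar).2 rstar
  obtain ⟨K, hK⟩ := hLip
  set g : ℝ → ℝ := fun c => f (ybar + c • (1 : Fin d → ℝ)) with hg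
  have hgmono : StrictMono g := (hSISTr ybar).1
  set F : ℝ → ℝ := fun s => abar * (rstar - f (y s + z s • (1 : Fin d → ℝ))) with hF
  have hzF : ∀ s ∈ Set.Ici (0:ℝ), HasDerivWithinAt z (F s) (Set.Ici 0) s := hz
  -- key estimate: for any ε > 0, eventually |z s - cbar| ≤ ε
  have key : ∀ ε : ℝ, 0 < ε → (∀ᶠ s in Filter.atTop, |z s - cbar| ≤ ε) := by
    intro ε hε
    set δ₁ := g (cbar + ε) - rstar with hδ₁
    set δ₂ := rstar - g (cbar - ε) with hδ₂
    have hδ₁pos : 0 < δ₁ := by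
      have := hgmono (show cbar < cbar + ε by linarith)
      rw [hcbar] at this
      simp only [hδ₁]
      linarith
    have hδ₂pos : 0 < δ₂ := by
      have := hgmono (show cbar - ε < cbar by linarith)
      rw [hcbar] at this
      simp only [hδ₂]
      linarith
    set δ := min δ₁ δ₂ with hδ
    have hδpos : 0 < δ := lt_min hδ₁pos hδ₂pos
    have hK1 : (0:ℝ) < (K:ℝ) + 1 := by positivity
    set η := δ / (2 * ((K:ℝ) + 1)) with hη
    have hηpos : 0 < η := by positivity
    obtain ⟨T₁, hT₁⟩ := Metric.tendsto_atTop.mp hylim η hηpos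
    set T := max T₁ 0 with hT
    have hT0 : 0 ≤ T := le_max_right _ _
    -- Lipschitz bound
    have hlip : ∀ s, T ≤ s → |f (y s + z s • (1 : Fin d → ℝ)) - g (z s)| ≤ δ/2 := by
      intro s hs
      have hd : dist (y s) ybar < η := hT₁ s (le_trans (le_max_left _ _) hs)
      have h1 := hK.dist_le_mul (y s + z s • (1 : Fin d → ℝ)) (ybar + z s • (1 : Fin d → ℝ))
      rw [dist_add_right, Real.dist_eq] at h1
      have h2 : (K:ℝ) * dist (y s) ybar ≤ (K:ℝ) * η :=
        mul_le_mul_of_nonneg_left hd.le K.coe_nonneg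
      have h3 : (K:ℝ) * η ≤ δ/2 := by
        have heq : η * (2*((K:ℝ)+1)) = δ := by
          rw [hη]; field_simp
        nlinarith [hηpos.le, K.coe_nonneg, mul_nonneg hηpos.le K.coe_nonneg]
      exact le_trans h1 (le_trans h2 h3)
    -- upper barrier
    have hup : ∀ᶠ s in Filter.atTop, z s ≤ cbar + ε := by
      apply eventually_le_of_barrier z F hzF (cbar + ε) (abar * δ / 2) T
        (by positivity) hT0
      intro s hs hzs
      have h1 := hlip s hs
      have h2 : rstar + δ ≤ g (z s) := by
        have := hgmono.monotone hzs
        have hd : δ ≤ δ₁ := min_le_left _ _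
        simp only [hδ₁] at hd
        linarith
      have h3 : rstar + δ/2 ≤ f (y s + z s • (1 : Fin d → ℝ)) := by
        have := abs_le.mp h1
        linarith
      have : rstar - f (y s + z s • (1 : Fin d → ℝ)) ≤ -(δ/2) := by linarith
      calc F s ≤ abar * (-(δ/2)) := mul_le_mul_of_nonneg_left this habar.le
        _ = -(abar * δ / 2) := by ring
    -- lower barrier
    have hdown : ∀ᶠ s in Filter.atTop, -(z s) ≤ -(cbar - ε) := by
      apply eventually_le_of_barrier (fun s => -(z s)) (fun s => -(F s))
        (fun s hs => (hzF s hs).neg) (-(cbar - ε)) (abar * δ / 2) T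
        (by positivity) hT0
      intro s hs hzs
      have hzs' : z s ≤ cbar - ε := by linarith
      have h1 := hlip s hs
      have h2 : g (z s) ≤ rstar - δ := by
        have := hgmono.monotone hzs'
        have hd : δ ≤ δ₂ := min_le_right _ _
        simp only [hδ₂] at hd
        linarith
      have h3 : f (y s + z s • (1 : Fin d → ℝ)) ≤ rstar - δ/2 := by
        have := abs_le.mp h1
        linarith
      have : δ/2 ≤ rstar - f (y s + z s • (1 : Fin d → ℝ)) := by linarith
      have h4 : abar * (δ/2) ≤ F s := mul_le_mul_of_nonneg_left this habar.le
      simp only [hF] at h4 ⊢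
      linarith
    filter_upwards [hup, hdown] with s h1 h2
    rw [abs_le]
    constructor <;> linarith
  have hzt : Filter.Tendsto z Filter.atTop (nhds cbar) := by
    rw [Metric.tendsto_atTop]
    intro ε hε
    obtain ⟨N, hN⟩ := Filter.eventually_atTop.mp (key (ε/2) (by linarith))
    exact ⟨N, fun n hn => by rw [Real.dist_eq]; linarith [hN n hn]⟩
  refine ⟨cbar, hcbar, fun c' h => hgmono.injective (h.trans hcbar.symm), hzt, ?_⟩
  exact hylim.add (hzt.smul_const _)
end

section
/- Let f : ℝ^d → ℝ be Lipschitz continuous with Lipschitz constant L_f with respect to the supremum norm and SISTr, let ᾱ > 0, r* ∈ ℝ, and let x̄ ∈ ℝ^d satisfy f(x̄) = r*. Let δ₀ > 0 and let y : [0,∞) → ℝ^d be continuous with ‖y(t) − x̄‖ ≤ δ₀ for all t ≥ 0. Let z : [0,∞) → ℝ be differentiable with z(0) = 0 and z'(t) = ᾱ·(r* − f(y(t) + z(t)·𝟏)) for all t ≥ 0. Suppose ε > 0 and δ > L_f·δ₀ satisfy f(x̄ + ε·𝟏) − f(x̄) ≥ δ and f(x̄) − f(x̄ − ε·𝟏)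 ≥ δ. Then |z(t)| ≤ ε for all t ≥ 0. -/
/-- Barrier lemma: if `z a ≤ ε` and `deriv z < 0` wherever `z ≥ ε` on `(a,b)`,
then `z b ≤ ε`. -/
lemma barrier_aux (z : ℝ → ℝ) (ε a b : ℝ) (hab : a < b)
    (hcont : ContinuousOn z (Set.Icc a b))
    (hza : z a ≤ ε)
    (hd : ∀ s ∈ Set.Ioo a b, ε ≤ z s → deriv z s < 0) :
    z b ≤ ε := by
  by_contra hb
  push_neg at hb
  set S : Set ℝ := {s | s ∈ Set.Icc a b ∧ z s ≤ ε} with hSdef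
  have hSne : S.Nonempty := ⟨a, ⟨le_rfl, hab.le⟩, hza⟩
  have hSbdd : BddAbove S := ⟨b, fun s hs => hs.1.2⟩
  have hSclosed : IsClosed S := by
    have hSeq : S = Set.Icc a b ∩ z ⁻¹' Set.Iic ε := rfl
    rw [hSeq]
    exact hcont.preimage_isClosed_of_isClosed isClosed_Icc isClosed_Iic
  obtain ⟨s₀, hs₀def⟩ : ∃ s₀ : ℝ, s₀ = sSup S := ⟨_, rfl⟩
  have hs₀S : s₀ ∈ S := hs₀def ▸ hSclosed.csSup_mem hSne hSbdd
  have hs₀b : s₀ < b := lt_of_le_of_ne hs₀S.1.2 (by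
    rintro rfl; exact absurd hs₀S.2 (not_le.2 hb))
  have hanti : StrictAntiOn z (Set.Icc s₀ b) := by
    apply strictAntiOn_of_deriv_neg (convex_Icc _ _)
      (hcont.mono (Set.Icc_subset_Icc_left hs₀S.1.1))
    intro s hs
    rw [interior_Icc] at hs
    refine hd s ⟨lt_of_le_of_lt hs₀S.1.1 hs.1, hs.2⟩ ?_
    by_contra hle
    push_neg at hle
    have hsS : s ∈ S := ⟨⟨hs₀S.1.1.trans hs.1.le, hs.2.le⟩, hle.le⟩
    exact absurd (hs₀def ▸ le_csSup hSbdd hsS) (not_le.2 hs.1)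
  have := hanti ⟨le_rfl, hs₀b.le⟩ ⟨hs₀b.le, le_rfl⟩ hs₀b
  linarith [hs₀S.2]

theorem stmt13 (d : ℕ) (f : (Fin d → ℝ) → ℝ) (Lf : NNReal)
    (hLip : LipschitzWith Lf f) (hSISTr : SISTr f)
    (abar rstar : ℝ) (habar : 0 < abar)
    (xbar : Fin d → ℝ) (hxbar : f xbar = rstar)
    (δ₀ : ℝ) (hδ₀ : 0 < δ₀)
    (y : ℝ → Fin d → ℝ) (hycont : ContinuousOn y (Set.Ici (0 : ℝ)))
    (hynear : ∀ s ∈ Set.Ici (0 : ℝ), ‖y s - xbar‖ ≤ δ₀)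
    (z : ℝ → ℝ) (hz0 : z 0 = 0)
    (hz : ∀ s ∈ Set.Ici (0 : ℝ), HasDerivWithinAt z
      (abar * (rstar - f (y s + z s • (1 : Fin d → ℝ)))) (Set.Ici (0 : ℝ)) s)
    (ε δ : ℝ) (hε : 0 < ε) (hδ : (Lf : ℝ) * δ₀ < δ)
    (hup : δ ≤ f (xbar + ε • (1 : Fin d → ℝ)) - f xbar)
    (hdown : δ ≤ f xbar - f (xbar - ε • (1 : Fin d → ℝ))) :
    ∀ s ∈ Set.Ici (0 : ℝ), |z s| ≤ ε := by
  have hzcont : ContinuousOn z (Set.Ici (0 : ℝ)) :=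
    fun s hs => (hz s hs).continuousWithinAt
  -- Lipschitz consequence
  have hlipb : ∀ s ∈ Set.Ici (0 : ℝ), ∀ c : ℝ,
      |f (y s + c • (1 : Fin d → ℝ)) - f (xbar + c • (1 : Fin d → ℝ))|
        ≤ (Lf : ℝ) * δ₀ := by
    intro s hs c
    have h1 := hLip.dist_le_mul (y s + c • (1 : Fin d → ℝ))
      (xbar + c • (1 : Fin d → ℝ))
    rw [dist_eq_norm, dist_eq_norm] at h1
    have h2 : (y s + c • (1 : Fin d → ℝ)) - (xbar + c • (1 : Fin d → ℝ))
        = y s - xbar := by abel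
    rw [h2] at h1
    calc |f (y s + c • (1 : Fin d → ℝ)) - f (xbar + c • (1 : Fin d → ℝ))|
        = ‖f (y s + c • (1 : Fin d → ℝ)) - f (xbar + c • (1 : Fin d → ℝ))‖ := rfl
      _ ≤ (Lf : ℝ) * ‖y s - xbar‖ := h1
      _ ≤ (Lf : ℝ) * δ₀ := by
          exact mul_le_mul_of_nonneg_left (hynear s hs) Lf.coe_nonneg
  -- derivative sign when z s ≥ ε
  have hsign_up : ∀ s ∈ Set.Ici (0 : ℝ), ε ≤ z s →
      abar * (rstar - f (y s + z s • (1 : Fin d → ℝ))) < 0 := by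
    intro s hs hzs
    have hmono : f (y s + ε • (1 : Fin d → ℝ))
        ≤ f (y s + z s • (1 : Fin d → ℝ)) := (hSISTr (y s)).1.monotone hzs
    have hl := hlipb s hs ε
    have : rstar < f (y s + z s • (1 : Fin d → ℝ)) := by
      have := abs_le.1 hl
      have hfx : rstar + δ ≤ f (xbar + ε • (1 : Fin d → ℝ)) := by
        linarith [hup, hxbar.symm.le, hxbar.le]
      linarith
    nlinarith
  have hsign_down : ∀ s ∈ Set.Ici (0 : ℝ), z s ≤ -ε →
      0 < abar * (rstar - f (y s + z s • (1 : Fin d → ℝ))) := by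
    intro s hs hzs
    have hmono : f (y s + z s • (1 : Fin d → ℝ))
        ≤ f (y s + (-ε) • (1 : Fin d → ℝ)) := (hSISTr (y s)).1.monotone hzs
    have hl := hlipb s hs (-ε)
    have hx : xbar + (-ε) • (1 : Fin d → ℝ) = xbar - ε • (1 : Fin d → ℝ) := by
      rw [neg_smul, sub_eq_add_neg]
    rw [hx] at hl
    have : f (y s + z s • (1 : Fin d → ℝ)) < rstar := by
      have := abs_le.1 hl
      linarith
    nlinarith
  -- derivative at interior points
  have hderivat : ∀ s : ℝ, 0 < s →
      deriv z s = abar * (rstar - f (y s + z s • (1 : Fin d → ℝ))) := by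
    intro s hs
    exact ((hz s hs.le).hasDerivAt (Ici_mem_nhds hs)).deriv
  intro t ht
  rw [abs_le]
  rcases eq_or_lt_of_le (Set.mem_Ici.mp ht) with h0 | h0t
  · rw [← h0, hz0]; constructor <;> linarith
  constructor
  · -- lower bound: apply barrier to -z
    have hb := barrier_aux (fun s => -(z s)) ε 0 t h0t
      (hzcont.neg.mono Set.Icc_subset_Ici_self)
      (by simp [hz0]; linarith)
      (by
        intro s hs hges
        have hds : HasDerivAt (fun u => -(z u))
            (-(abar * (rstar - f (y s + z s • (1 : Fin d → ℝ))))) s :=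
          ((hz s hs.1.le).hasDerivAt (Ici_mem_nhds hs.1)).neg
        rw [hds.deriv]
        have hges' : ε ≤ -z s := hges
        have : z s ≤ -ε := by linarith
        linarith [hsign_down s hs.1.le this])
    simp only [neg_le] at hb ⊢
    linarith [hb]
  · exact barrier_aux z ε 0 t h0t
      (hzcont.mono Set.Icc_subset_Ici_self)
      (by rw [hz0]; linarith)
      (fun s hs hges => by
        rw [hderivat s hs.1]; exact hsign_up s hs.1.le hges)
end

section
/- Let E be a complete metric space, let F : E → E be a continuous bijection whose inverse F⁻¹ is Lipschitz with constant e^L for some L ≥ 0, and let (y_j)_{j≥0} be a sequence in E such that for some β > L and some ĵ, dist(y_{j+1}, F(y_j)) ≤ e^{−β·j} for all j ≥ ĵ. Then for every δ with e^{−β} < δ < e^{−L} there exist a point z* ∈ E and a constant C ≥ 0 such that dist(y_j, F^{(j)}(z*)) ≤ C·δ^j for all j ≥ 0, where F^{(j)} denotes the j-fold iterate of F. -/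
/-!
Pull the pseudo-orbit back along the inverse: `z k = F⁻ᵏ (y k)`. For fixed `j`, the points
`Fʲ (z (j + i)) = F⁻ⁱ (y (j + i))` start at `y j` and move by at most `(e^L)^(i+1) e^{-β (j+i)}`
from `i` to `i + 1`, a geometric series of ratio `e^{L-β} < 1`. Hence `z` is Cauchy, with limit
`z*`, and by continuity of `Fʲ` the distance from `y j` to `Fʲ z*` is at most a constant times
`e^{-β j} ≤ δʲ`. The finitely many defects before `ĵ` are absorbed into the constant.
-/

open Filter Function Asymptotics NNReal

theorem exists_abs_le_mul_pow_of_eventually {a : ℕ → ℝ} {q A : ℝ} (hq : 0 < q)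
    (h : ∀ᶠ j in atTop, |a j| ≤ A * q ^ j) : ∃ C, ∀ j, |a j| ≤ C * q ^ j := by
  have hbig : a =O[cofinite] (q ^ ·) := by
    rw [Nat.cofinite_eq_atTop]
    exact IsBigO.of_bound A (by simpa [abs_of_pos hq] using h)
  obtain ⟨C, hC⟩ :=
    (isBigO_cofinite_iff fun j hj => absurd hj (pow_ne_zero j hq.ne')).1 hbig
  exact ⟨C, fun j => by simpa [abs_of_pos hq] using hC j⟩

section Shadowing

variable {X : Type*} [MetricSpace X] {F G : X → X} {K : ℝ≥0}

theorem dist_iterate_iterate_succ_le (hG : LipschitzWith K G) (hGF : LeftInverse G F)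
    (i : ℕ) (a b : X) : dist (G^[i] a) (G^[i + 1] b) ≤ K ^ (i + 1) * dist (F a) b := by
  calc dist (G^[i] a) (G^[i + 1] b)
      = dist (G^[i] (G (F a))) (G^[i] (G b)) := by rw [hGF a, iterate_succ_apply]
    _ ≤ K ^ i * (K * dist (F a) b) := by
        push_cast [← NNReal.coe_pow]
        exact ((hG.iterate i).dist_le_mul _ _).trans
          (mul_le_mul_of_nonneg_left (hG.dist_le_mul _ _) (by positivity))
    _ = K ^ (i + 1) * dist (F a) b := by ring

theorem exists_dist_iterate_le_mul_pow [CompleteSpace X] (hF : Continuous F)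
    (hG : LipschitzWith K G) (hGF : LeftInverse G F) (hFG : RightInverse G F)
    {y : ℕ → X} {c q : ℝ} (hKq : K * q < 1)
    (hy : ∀ j, dist (y (j + 1)) (F (y j)) ≤ c * q ^ j) :
    ∃ z, ∀ j, dist (y j) (F^[j] z) ≤ c * K / (1 - K * q) * q ^ j := by
  set u : ℕ → ℕ → X := fun j i => G^[i] (y (j + i))
  have hstep : ∀ j i, dist (u j i) (u j (i + 1)) ≤ c * K * q ^ j * (K * q) ^ i := by
    intro j i
    calc dist (u j i) (u j (i + 1))
        ≤ K ^ (i + 1) * dist (F (y (j + i))) (y (j + i + 1)) :=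
          dist_iterate_iterate_succ_le hG hGF i _ _
      _ ≤ K ^ (i + 1) * (c * q ^ (j + i)) := by
          rw [dist_comm]; gcongr; exact hy _
      _ = c * K * q ^ j * (K * q) ^ i := by ring
  have hFu : ∀ j i, F^[j] (u 0 (i + j)) = u j i := by
    intro j i
    show F^[j] (G^[i + j] (y (0 + (i + j)))) = G^[i] (y (j + i))
    rw [zero_add, add_comm i j, iterate_add_apply, hFG.iterate j]
  obtain ⟨z, hz⟩ := cauchySeq_tendsto_of_complete
    (cauchySeq_of_le_geometric _ _ hKq (by simpa using hstep 0))
  refine ⟨z, fun j => ?_⟩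
  have hlim : Tendsto (u j) atTop (nhds (F^[j] z)) := by
    have := ((hF.iterate j).tendsto z).comp (hz.comp (tendsto_add_atTop_nat j))
    rwa [show F^[j] ∘ u 0 ∘ (· + j) = u j from funext (hFu j)] at this
  calc dist (y j) (F^[j] z) = dist (u j 0) (F^[j] z) := rfl
    _ ≤ c * K * q ^ j * (K * q) ^ 0 / (1 - K * q) :=
        dist_le_of_le_geometric_of_tendsto _ _ hKq (hstep j) hlim 0
    _ = c * K / (1 - K * q) * q ^ j := by ring

end Shadowing

theorem stmt14_general (E : Type*) [MetricSpace E] [CompleteSpace E]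
    (F G : E → E) (hFcont : Continuous F)
    -- `G` is the inverse of `F`
    (hGF : ∀ x, G (F x) = x) (hFG : ∀ x, F (G x) = x)
    (L : ℝ)
    -- `F⁻¹` is Lipschitz with constant `e^L`
    (hGlip : ∀ x y : E, dist (G x) (G y) ≤ Real.exp L * dist x y)
    (y : ℕ → E) (β : ℝ) (hβ : L < β) (jhat : ℕ)
    (htrack : ∀ j : ℕ, jhat ≤ j → dist (y (j + 1)) (F (y j)) ≤ Real.exp (-β * j)) :
    ∀ δ : ℝ, Real.exp (-β) < δ → δ < Real.exp (-L) →
      ∃ (zstar : E) (C : ℝ), 0 ≤ C ∧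
        ∀ j : ℕ, dist (y j) (F^[j] zstar) ≤ C * δ ^ j := by
  intro δ hδ _
  set q := Real.exp (-β)
  let K : ℝ≥0 := ⟨Real.exp L, (Real.exp_pos L).le⟩
  have hKq : (K : ℝ) * q < 1 := by
    show Real.exp L * Real.exp (-β) < 1
    rw [← Real.exp_add, Real.exp_lt_one_iff]; linarith
  have hq : 0 < q := Real.exp_pos _
  obtain ⟨c, hc⟩ := exists_abs_le_mul_pow_of_eventually
    (a := fun j => dist (y (j + 1)) (F (y j))) (A := 1) hq
    (eventually_atTop.2 ⟨jhat, fun j hj => by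
      rw [abs_of_nonneg dist_nonneg, one_mul, ← Real.exp_nat_mul, mul_comm]
      exact htrack j hj⟩)
  simp only [abs_of_nonneg dist_nonneg] at hc
  obtain ⟨z, hz⟩ := exists_dist_iterate_le_mul_pow hFcont (LipschitzWith.of_dist_le_mul hGlip)
    (hGF ·) (hFG ·) hKq hc
  have hC : 0 ≤ c * K / (1 - K * q) := by
    have : 0 ≤ c := by simpa using dist_nonneg.trans (hc 0)
    have : (0 : ℝ) < 1 - K * q := by linarith
    positivity
  refine ⟨z, _, hC, fun j => (hz j).trans ?_⟩
  gcongr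

theorem stmt14 (E : Type*) [MetricSpace E] [CompleteSpace E]
    (F G : E → E) (hFcont : Continuous F) (hFbij : Function.Bijective F)
    -- `G` is the inverse of `F`
    (hGF : ∀ x, G (F x) = x) (hFG : ∀ x, F (G x) = x)
    (L : ℝ) (hL : 0 ≤ L)
    -- `F⁻¹` is Lipschitz with constant `e^L`
    (hGlip : ∀ x y : E, dist (G x) (G y) ≤ Real.exp L * dist x y)
    (y : ℕ → E) (β : ℝ) (hβ : L < β) (jhat : ℕ)
    (htrack : ∀ j : ℕ, jhat ≤ j → dist (y (j + 1)) (F (y j)) ≤ Real.exp (-β * j)) :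
    ∀ δ : ℝ, Real.exp (-β) < δ → δ < Real.exp (-L) →
      ∃ (zstar : E) (C : ℝ), 0 ≤ C ∧
        ∀ j : ℕ, dist (y j) (F^[j] zstar) ≤ C * δ ^ j :=
  stmt14_general E F G hFcont hGF hFG L hGlip y β hβ jhat htrack
end

section
/- Let B, L ≥ 0, let g : [0,1] → ℝ satisfy |g(τ)| ≤ B for all τ and |g(τ) − g(τ')| ≤ L·|τ − τ'| for all τ, τ' ∈ [0,1], let λ : [0,1] → ℝ be integrable, and let c ∈ ℝ. Define F(s) := ∫₀ˢ (λ(τ) − c) dτ for s ∈ [0,1]. Then for every s ∈ [0,1], |∫₀ˢ (λ(τ) − c)·g(τ) dτ| ≤ (B + L)·sup_{τ∈[0,s]} |F(τ)|. -/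
open MeasureTheory intervalIntegral Set

private lemma abel_id16 (a b : ℕ → ℝ) : ∀ N : ℕ,
    ∑ i ∈ Finset.range (N + 1), a i * (b (i + 1) - b i)
      = a N * b (N + 1) - a 0 * b 0
        - ∑ i ∈ Finset.range N, (a (i + 1) - a i) * b (i + 1) := by
  intro N
  induction N with
  | zero => simp; ring
  | succ N ih =>
    rw [Finset.sum_range_succ, ih, Finset.sum_range_succ]
    ring

theorem stmt16 (B L : ℝ) (hB : 0 ≤ B) (hL : 0 ≤ L) (g lam : ℝ → ℝ) (c : ℝ)
    (hgB : ∀ τ ∈ Set.Icc (0 : ℝ) 1, |g τ| ≤ B)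
    (hgL : ∀ τ ∈ Set.Icc (0 : ℝ) 1, ∀ τ' ∈ Set.Icc (0 : ℝ) 1,
      |g τ - g τ'| ≤ L * |τ - τ'|)
    (hlam : IntervalIntegrable lam MeasureTheory.volume 0 1) :
    ∀ s ∈ Set.Icc (0 : ℝ) 1,
      |∫ τ in (0 : ℝ)..s, (lam τ - c) * g τ| ≤
        (B + L) *
          sSup ((fun τ => |∫ u in (0 : ℝ)..τ, (lam u - c)|) '' Set.Icc (0 : ℝ) s) := by
  intro s hs
  obtain ⟨hs0, hs1⟩ := hs
  set F : ℝ → ℝ := fun t => ∫ u in (0 : ℝ)..t, (lam u - c) with hFdef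
  set M : ℝ := sSup ((fun τ => |∫ u in (0 : ℝ)..τ, (lam u - c)|) '' Set.Icc (0 : ℝ) s)
    with hMdef
  -- basic integrability facts
  have hlam' : IntervalIntegrable (fun u => lam u - c) volume 0 1 :=
    hlam.sub intervalIntegrable_const
  have huIcc : Set.uIcc (0 : ℝ) 1 = Set.Icc (0 : ℝ) 1 := Set.uIcc_of_le (by norm_num)
  -- continuity of g on [0,1]
  have hgc : ContinuousOn g (Set.Icc (0 : ℝ) 1) := by
    have hlip : LipschitzOnWith (Real.toNNReal L) g (Set.Icc (0 : ℝ) 1) := by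
      rw [lipschitzOnWith_iff_dist_le_mul]
      intro x hx y hy
      rw [Real.dist_eq, Real.dist_eq]
      calc |g x - g y| ≤ L * |x - y| := hgL x hx y hy
        _ = (Real.toNNReal L : ℝ) * |x - y| := by rw [Real.coe_toNNReal L hL]
    exact hlip.continuousOn
  have hInt : IntervalIntegrable (fun τ => (lam τ - c) * g τ) volume 0 1 :=
    hlam'.mul_continuousOn (by rwa [huIcc])
  -- continuity of F on [0,1]
  have hFc : ContinuousOn F (Set.Icc (0 : ℝ) 1) := by
    have := continuousOn_primitive_interval' (a := (0 : ℝ)) hlam' Set.left_mem_uIcc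
    rwa [huIcc] at this
  -- M is an upper bound, and 0 ≤ M
  have hIccsub : Set.Icc (0 : ℝ) s ⊆ Set.Icc (0 : ℝ) 1 :=
    Set.Icc_subset_Icc le_rfl hs1
  have hbdd : BddAbove ((fun τ => |∫ u in (0 : ℝ)..τ, (lam u - c)|) '' Set.Icc (0 : ℝ) s) := by
    have hcont : ContinuousOn (fun τ => |F τ|) (Set.Icc (0 : ℝ) s) :=
      (continuous_abs.comp_continuousOn (hFc.mono hIccsub))
    exact (isCompact_Icc.image_of_continuousOn hcont).bddAbove
  have hMub : ∀ t ∈ Set.Icc (0 : ℝ) s, |F t| ≤ M := fun t ht =>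
    le_csSup hbdd ⟨t, ht, rfl⟩
  have hF0 : F 0 = 0 := intervalIntegral.integral_same
  have hM0 : 0 ≤ M := by
    have := hMub 0 ⟨le_rfl, hs0⟩
    rw [hF0] at this
    simpa using this
  set C : ℝ := ∫ u in (0 : ℝ)..s, |lam u - c| with hCdef
  have hC0 : 0 ≤ C :=
    intervalIntegral.integral_nonneg hs0 (fun u _ => abs_nonneg _)
  -- the key finite approximation bound
  have key : ∀ n : ℕ,
      |∫ τ in (0 : ℝ)..s, (lam τ - c) * g τ| ≤
        (B + L) * M + L * s * C / (n + 1) := by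
    intro n
    set N : ℕ := n + 1 with hNdef
    have hNpos : (0 : ℝ) < (N : ℝ) := by positivity
    set t : ℕ → ℝ := fun i => (i : ℝ) * s / N with htdef
    have ht0 : t 0 = 0 := by simp [htdef]
    have htN : t N = s := by
      show (N : ℝ) * s / N = s
      exact mul_div_cancel_left₀ s hNpos.ne'
    have htmono : ∀ i : ℕ, t i ≤ t (i + 1) := by
      intro i
      apply div_le_div_of_nonneg_right _ hNpos.le
      push_cast; nlinarith
    have htstep : ∀ i : ℕ, t (i + 1) - t i = s / N := by
      intro i
      rw [htdef]
      push_cast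
      ring
    have htmem : ∀ i : ℕ, i ≤ N → t i ∈ Set.Icc (0 : ℝ) s := by
      intro i hi
      constructor
      · positivity
      · rw [htdef, div_le_iff₀ hNpos]
        have : (i : ℝ) ≤ (N : ℝ) := by exact_mod_cast hi
        nlinarith
    have htmem1 : ∀ i : ℕ, i ≤ N → t i ∈ Set.Icc (0 : ℝ) 1 := fun i hi =>
      hIccsub (htmem i hi)
    -- integrability on each subinterval
    have hsubint : ∀ i : ℕ, i < N → Set.uIcc (t i) (t (i + 1)) ⊆ Set.uIcc (0 : ℝ) 1 := by
      intro i hi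
      rw [huIcc, Set.uIcc_of_le (htmono i)]
      exact Set.Icc_subset_Icc (htmem1 i hi.le).1 (htmem1 (i + 1) hi).2
    have hpiece : ∀ i < N, IntervalIntegrable (fun τ => (lam τ - c) * g τ) volume
        (t i) (t (i + 1)) := fun i hi => hInt.mono_set (hsubint i hi)
    have hpieceLam : ∀ i < N, IntervalIntegrable (fun τ => lam τ - c) volume
        (t i) (t (i + 1)) := fun i hi => hlam'.mono_set (hsubint i hi)
    have hpieceAbs : ∀ i < N, IntervalIntegrable (fun τ => |lam τ - c|) volume
        (t i) (t (i + 1)) := fun i hi => (hpieceLam i hi).abs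
    -- split the integral
    have hsplit : (∫ τ in (0 : ℝ)..s, (lam τ - c) * g τ) =
        ∑ i ∈ Finset.range N, ∫ τ in (t i)..(t (i + 1)), (lam τ - c) * g τ := by
      rw [intervalIntegral.sum_integral_adjacent_intervals hpiece, ht0, htN]
    have hsplitAbs : (∑ i ∈ Finset.range N,
        ∫ τ in (t i)..(t (i + 1)), |lam τ - c|) = C := by
      rw [intervalIntegral.sum_integral_adjacent_intervals hpieceAbs, ht0, htN]
    -- integrability from 0 to t j
    have hzero : ∀ j : ℕ, j ≤ N → IntervalIntegrable (fun τ => lam τ - c) volume 0 (t j) := by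
      intro j hj
      refine hlam'.mono_set (Set.uIcc_subset_uIcc Set.left_mem_uIcc ?_)
      rw [huIcc]; exact htmem1 j hj
    -- the Riemann-type sum
    set S : ℝ := ∑ i ∈ Finset.range N, g (t i) * (F (t (i + 1)) - F (t i)) with hSdef
    -- bound |I - S|
    have hIS : |(∫ τ in (0 : ℝ)..s, (lam τ - c) * g τ) - S| ≤ L * (s / N) * C := by
      have hterm : ∀ i ∈ Finset.range N,
          |(∫ τ in (t i)..(t (i + 1)), (lam τ - c) * g τ) -
            g (t i) * (F (t (i + 1)) - F (t i))| ≤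
          L * (s / N) * ∫ τ in (t i)..(t (i + 1)), |lam τ - c| := by
        intro i hi
        rw [Finset.mem_range] at hi
        have hFdiff : F (t (i + 1)) - F (t i) =
            ∫ τ in (t i)..(t (i + 1)), (lam τ - c) :=
          intervalIntegral.integral_interval_sub_left (hzero (i + 1) hi) (hzero i hi.le)
        have hconst : IntervalIntegrable (fun τ => g (t i) * (lam τ - c)) volume
            (t i) (t (i + 1)) := (hpieceLam i hi).const_mul _
        have heq : (∫ τ in (t i)..(t (i + 1)), (lam τ - c) * g τ) -
            g (t i) * (F (t (i + 1)) - F (t i)) =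
            ∫ τ in (t i)..(t (i + 1)), (lam τ - c) * (g τ - g (t i)) := by
          rw [hFdiff, ← intervalIntegral.integral_const_mul,
            ← intervalIntegral.integral_sub (hpiece i hi) hconst]
          congr 1; ext τ; ring
        rw [heq]
        calc |∫ τ in (t i)..(t (i + 1)), (lam τ - c) * (g τ - g (t i))|
            ≤ ∫ τ in (t i)..(t (i + 1)), |(lam τ - c) * (g τ - g (t i))| :=
              intervalIntegral.abs_integral_le_integral_abs (htmono i)
          _ ≤ ∫ τ in (t i)..(t (i + 1)), L * (s / N) * |lam τ - c| := by
              have hfint : IntervalIntegrable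
                  (fun τ => (lam τ - c) * (g τ - g (t i))) volume (t i) (t (i + 1)) := by
                have h := (hpiece i hi).sub hconst
                have heq2 : (fun τ => (lam τ - c) * (g τ - g (t i))) =
                    (fun τ => (lam τ - c) * g τ - g (t i) * (lam τ - c)) := by
                  funext τ; ring
                rw [heq2]; exact h
              apply intervalIntegral.integral_mono_on (htmono i)
                hfint.abs ((hpieceAbs i hi).const_mul _) ?_
              intro τ hτ
              have hτ1 : τ ∈ Set.Icc (0 : ℝ) 1 := by
                constructor
                · exact le_trans (htmem1 i hi.le).1 hτ.1
                · exact le_trans hτ.2 (htmem1 (i + 1) hi).2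
              rw [abs_mul]
              have h1 : |g τ - g (t i)| ≤ L * (s / N) := by
                calc |g τ - g (t i)| ≤ L * |τ - t i| := hgL τ hτ1 (t i) (htmem1 i hi.le)
                  _ ≤ L * (s / N) := by
                      apply mul_le_mul_of_nonneg_left _ hL
                      rw [abs_of_nonneg (by linarith [hτ.1])]
                      have := htstep i
                      linarith [hτ.2]
              calc |lam τ - c| * |g τ - g (t i)| ≤ |lam τ - c| * (L * (s / N)) :=
                    mul_le_mul_of_nonneg_left h1 (abs_nonneg _)
                _ = L * (s / N) * |lam τ - c| := by ring
          _ = L * (s / N) * ∫ τ in (t i)..(t (i + 1)), |lam τ - c| :=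
              intervalIntegral.integral_const_mul _ _
      calc |(∫ τ in (0 : ℝ)..s, (lam τ - c) * g τ) - S|
          = |∑ i ∈ Finset.range N, ((∫ τ in (t i)..(t (i + 1)), (lam τ - c) * g τ) -
              g (t i) * (F (t (i + 1)) - F (t i)))| := by
            rw [hsplit, hSdef, ← Finset.sum_sub_distrib]
        _ ≤ ∑ i ∈ Finset.range N, |(∫ τ in (t i)..(t (i + 1)), (lam τ - c) * g τ) -
              g (t i) * (F (t (i + 1)) - F (t i))| := Finset.abs_sum_le_sum_abs _ _
        _ ≤ ∑ i ∈ Finset.range N, L * (s / N) * ∫ τ in (t i)..(t (i + 1)), |lam τ - c| :=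
            Finset.sum_le_sum hterm
        _ = L * (s / N) * C := by rw [← Finset.mul_sum, hsplitAbs]
    -- bound |S| via Abel summation
    have hSbound : |S| ≤ (B + L) * M := by
      have habel := abel_id16 (fun i => g (t i)) (fun i => F (t i)) n
      have hb0 : F (t 0) = 0 := by rw [ht0, hF0]
      rw [hSdef]
      rw [show N = n + 1 from rfl] at *
      rw [habel, hb0, mul_zero, sub_zero]
      have hstepabs : ∀ i : ℕ, i < n → |g (t (i + 1)) - g (t i)| ≤ L * (s / N) := by
        intro i hi
        calc |g (t (i + 1)) - g (t i)| ≤ L * |t (i + 1) - t i| :=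
              hgL (t (i + 1)) (htmem1 (i + 1) (by omega)) (t i) (htmem1 i (by omega))
          _ = L * (s / N) := by
              rw [htstep i, abs_of_nonneg (by positivity)]
      calc |g (t n) * F (t (n + 1)) -
            ∑ i ∈ Finset.range n, (g (t (i + 1)) - g (t i)) * F (t (i + 1))|
          ≤ |g (t n) * F (t (n + 1))| +
            |∑ i ∈ Finset.range n, (g (t (i + 1)) - g (t i)) * F (t (i + 1))| :=
            abs_sub _ _
        _ ≤ B * M + ∑ i ∈ Finset.range n, (L * (s / N)) * M := by
            gcongr
            · rw [abs_mul]
              exact mul_le_mul (hgB _ (htmem1 n (by omega))) (hMub _ (htmem (n + 1) le_rfl))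
                (abs_nonneg _) hB
            · calc |∑ i ∈ Finset.range n, (g (t (i + 1)) - g (t i)) * F (t (i + 1))|
                  ≤ ∑ i ∈ Finset.range n, |(g (t (i + 1)) - g (t i)) * F (t (i + 1))| :=
                    Finset.abs_sum_le_sum_abs _ _
                _ ≤ ∑ i ∈ Finset.range n, (L * (s / N)) * M := by
                    apply Finset.sum_le_sum
                    intro i hi
                    rw [Finset.mem_range] at hi
                    rw [abs_mul]
                    exact mul_le_mul (hstepabs i hi) (hMub _ (htmem (i + 1) (by omega)))
                      (abs_nonneg _) (by positivity)
        _ = B * M + n * (L * (s / N)) * M := by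
            rw [Finset.sum_const, Finset.card_range]; push_cast; ring
        _ ≤ (B + L) * M := by
            have h1 : (n : ℝ) * (L * (s / N)) ≤ L * s := by
              have h0 : (n : ℝ) / (N : ℝ) ≤ 1 := by
                rw [div_le_one hNpos]
                show (n : ℝ) ≤ ((n + 1 : ℕ) : ℝ)
                push_cast; linarith
              have h0' : (0 : ℝ) ≤ (n : ℝ) / (N : ℝ) := by positivity
              have hr : (n : ℝ) * (L * (s / N)) = L * s * ((n : ℝ) / (N : ℝ)) := by ring
              rw [hr]
              nlinarith [mul_nonneg hL hs0]
            have h2 : L * s ≤ L := by nlinarith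
            nlinarith
    -- combine
    have htotal := abs_sub_abs_le_abs_sub (∫ τ in (0 : ℝ)..s, (lam τ - c) * g τ) S
    have hdiv : L * (s / N) * C = L * s * C / (n + 1) := by
      show L * (s / ((n + 1 : ℕ) : ℝ)) * C = L * s * C / ((n : ℝ) + 1)
      push_cast
      ring
    rw [hdiv] at hIS
    linarith [abs_nonneg ((∫ τ in (0 : ℝ)..s, (lam τ - c) * g τ) - S)]
  -- take the limit n → ∞
  have hlim : Filter.Tendsto (fun n : ℕ => (B + L) * M + L * s * C / (n + 1))
      Filter.atTop (nhds ((B + L) * M)) := by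
    have h1 : Filter.Tendsto (fun n : ℕ => L * s * C / (n + 1)) Filter.atTop (nhds 0) := by
      have := tendsto_one_div_add_atTop_nhds_zero_nat (𝕜 := ℝ)
      have h2 := this.const_mul (L * s * C)
      simpa [div_eq_mul_inv, mul_comm] using h2
    simpa using (tendsto_const_nhds.add h1)
  exact ge_of_tendsto' hlim key
end

section
/- Let I be a finite nonempty set, let α : ℕ → ℝ be a sequence with α_n > 0 for all n that is eventually nonincreasing (there is N₀ with α_{n+1} ≤ α_n for all n ≥ N₀), and suppose that for every x ∈ (0,1), sup_n α_{⌊xn⌋}/α_n < ∞. Let Y : ℕ → (nonempty subsets of I), define ν(n,i) := card{k < n : i ∈ Y_k}, and suppose there is Δ ∈ (0,1] such that liminf_{n→∞} ν(n,i)/n ≥ Δ for every i ∈ I. Then there exist a constant C ≥ 1 and an index N such that for all n ≥ N: α_{ν(n,i)} ≤ C·α_n for every i ∈ I, and Σ_{i∈Y_n} α_{ν(n,i)} ≥ α_n. -/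
/-!
Fix `x = Δ/2`. The frequency hypothesis gives, for all large `n` and every `i`,
`⌊x n⌋ ≤ ν(n,i) ≤ n`, and `⌊x n⌋ ≥ N₀`. On `[N₀, ∞)` the sequence `α` is nonincreasing, so
`α n ≤ α (ν(n,i)) ≤ α ⌊x n⌋ ≤ B α n`, where `B` bounds `α ⌊x n⌋ / α n`. The upper bound is the
first claim; the lower bound for any single `i ∈ Y n` already gives the second.
-/

open Filter

lemma eventually_floor_mul_le_of_lt_liminf {u : ℕ → ℕ} {c : ℝ}
    (hc : c < liminf (fun n : ℕ => (u n : ℝ) / n) atTop) :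
    ∀ᶠ n : ℕ in atTop, ⌊c * n⌋₊ ≤ u n := by
  have hbdd : IsBoundedUnder (· ≥ ·) atTop (fun n : ℕ => (u n : ℝ) / n) :=
    isBoundedUnder_of ⟨0, fun n => by positivity⟩
  filter_upwards [eventually_lt_of_lt_liminf hc hbdd] with n hn
  refine Nat.floor_le_of_le ?_
  rcases Nat.eq_zero_or_pos n with rfl | hpos
  · simp
  · exact ((lt_div_iff₀ (by exact_mod_cast hpos)).1 hn).le

lemma eventually_le_floor_mul {c : ℝ} (hc : 0 < c) (N : ℕ) :
    ∀ᶠ n : ℕ in atTop, N ≤ ⌊c * n⌋₊ :=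
  (tendsto_nat_floor_atTop.comp
    (tendsto_natCast_atTop_atTop.const_mul_atTop hc)).eventually_ge_atTop N

theorem stmt17_general (I : Type*) [Fintype I] [DecidableEq I]
    (α : ℕ → ℝ) (hpos : ∀ n, 0 < α n)
    (N₀ : ℕ) (hmono : ∀ n, N₀ ≤ n → α (n + 1) ≤ α n)
    (hratio : ∀ x : ℝ, 0 < x → x < 1 → ∃ B : ℝ, ∀ n : ℕ, α ⌊x * n⌋₊ / α n ≤ B)
    (Y : ℕ → Finset I) (hY : ∀ n, (Y n).Nonempty)
    (Δ : ℝ) (hΔ : 0 < Δ) (hΔ1 : Δ ≤ 1)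
    (hfreq : ∀ i : I, Δ ≤ Filter.liminf
      (fun n : ℕ => ((((Finset.range n).filter fun k => i ∈ Y k).card : ℝ) / n))
      Filter.atTop) :
    ∃ C : ℝ, 1 ≤ C ∧ ∃ N : ℕ, ∀ n, N ≤ n →
      (∀ i : I, α (((Finset.range n).filter fun k => i ∈ Y k).card) ≤ C * α n) ∧
      α n ≤ ∑ i ∈ Y n, α (((Finset.range n).filter fun k => i ∈ Y k).card) := by
  set ν : ℕ → I → ℕ := fun n i => ((Finset.range n).filter fun k => i ∈ Y k).card
  have hν_le : ∀ n i, ν n i ≤ n := fun n i =>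
    (Finset.card_filter_le _ _).trans_eq (Finset.card_range n)
  have hanti : AntitoneOn α (Set.Ici N₀) := antitoneOn_nat_Ici_of_succ_le hmono
  obtain ⟨B, hB⟩ := hratio (Δ / 2) (by linarith) (by linarith)
  obtain ⟨N, hN⟩ := eventually_atTop.1 <| (eventually_le_floor_mul (half_pos hΔ) N₀).and
    (eventually_all.2 fun i =>
      eventually_floor_mul_le_of_lt_liminf ((half_lt_self hΔ).trans_le (hfreq i)))
  refine ⟨max B 1, le_max_right _ _, N, fun n hn => ?_⟩
  obtain ⟨hN₀, hfloor⟩ := hN n hn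
  have hsandwich : ∀ i, α n ≤ α (ν n i) ∧ α (ν n i) ≤ α ⌊Δ / 2 * n⌋₊ := fun i =>
    ⟨hanti (hN₀.trans (hfloor i)) (hN₀.trans ((hfloor i).trans (hν_le n i))) (hν_le n i),
      hanti hN₀ (hN₀.trans (hfloor i)) (hfloor i)⟩
  refine ⟨fun i => ?_, ?_⟩
  · calc α (ν n i) ≤ α ⌊Δ / 2 * n⌋₊ := (hsandwich i).2
      _ ≤ B * α n := (div_le_iff₀ (hpos n)).1 (hB n)
      _ ≤ max B 1 * α n := mul_le_mul_of_nonneg_right (le_max_left _ _) (hpos n).le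
  · obtain ⟨i₀, hi₀⟩ := hY n
    exact (hsandwich i₀).1.trans (Finset.single_le_sum (fun i _ => (hpos (ν n i)).le) hi₀)

theorem stmt17 (I : Type*) [Fintype I] [Nonempty I] [DecidableEq I]
    (α : ℕ → ℝ) (hpos : ∀ n, 0 < α n)
    (N₀ : ℕ) (hmono : ∀ n, N₀ ≤ n → α (n + 1) ≤ α n)
    (hratio : ∀ x : ℝ, 0 < x → x < 1 → ∃ B : ℝ, ∀ n : ℕ, α ⌊x * n⌋₊ / α n ≤ B)
    (Y : ℕ → Finset I) (hY : ∀ n, (Y n).Nonempty)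
    (Δ : ℝ) (hΔ : 0 < Δ) (hΔ1 : Δ ≤ 1)
    (hfreq : ∀ i : I, Δ ≤ Filter.liminf
      (fun n : ℕ => ((((Finset.range n).filter fun k => i ∈ Y k).card : ℝ) / n))
      Filter.atTop) :
    ∃ C : ℝ, 1 ≤ C ∧ ∃ N : ℕ, ∀ n, N ≤ n →
      (∀ i : I, α (((Finset.range n).filter fun k => i ∈ Y k).card) ≤ C * α n) ∧
      α n ≤ ∑ i ∈ Y n, α (((Finset.range n).filter fun k => i ∈ Y k).card) :=
  stmt17_general I α hpos N₀ hmono hratio Y hY Δ hΔ hΔ1 hfreq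
end

section
/- Let g₁, …, g_m : ℝ^d → ℝ each be Lipschitz continuous and SISTr with pointwise scaling limits g_{k,∞}(x) := lim_{c→∞} g_k(cx)/c existing for every x, where each g_{k,∞} is SISTr at the origin. Let ψ : ℝ^m → ℝ be Lipschitz continuous and strictly monotone (ψ(y) > ψ(y') whenever y_i > y'_i for every i), with ψ(y) → ∞ as min_i y_i → ∞ and ψ(y) → −∞ as max_i y_i → −∞, and suppose ψ(c·y)/c → ψ_∞(y) pointwise as c → ∞ where ψ_∞ is Lipschitz continuous, strictly monotone, and has the same growth properties. Then f(x) := ψ(g₁(x), …, g_m(x)) is Lipschitz continuous and SISTr; for every x, lim_{c→∞} f(cx)/c = ψ_∞(g_{1,∞}(x), …, g_{m,∞}(x)); and this scaling limit is SISTr at the origin. -/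
/-- A continuous real function unbounded above and below is surjective. -/
lemma surj_of_cont (F : ℝ → ℝ) (hF : Continuous F)
    (htop : ∀ M : ℝ, ∃ c, M ≤ F c) (hbot : ∀ M : ℝ, ∃ c, F c ≤ M) :
    Function.Surjective F := by
  intro t
  obtain ⟨a, ha⟩ := hbot t
  obtain ⟨b, hb⟩ := htop t
  exact intermediate_value_univ a b hF ⟨ha, hb⟩

lemma exists_ge_all {m : ℕ} (u : Fin m → ℝ → ℝ)
    (hmono : ∀ k, Monotone (u k)) (hsurj : ∀ k, Function.Surjective (u k)) (N : ℝ) :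
    ∃ c, ∀ k, N ≤ u k c := by
  choose cc hcc using fun k => hsurj k N
  obtain ⟨M, hM⟩ := Finite.exists_le cc
  exact ⟨M, fun k => (hcc k).symm.le.trans (hmono k (hM k))⟩

lemma exists_le_all {m : ℕ} (u : Fin m → ℝ → ℝ)
    (hmono : ∀ k, Monotone (u k)) (hsurj : ∀ k, Function.Surjective (u k)) (N : ℝ) :
    ∃ c, ∀ k, u k c ≤ N := by
  choose cc hcc using fun k => hsurj k N
  obtain ⟨M, hM⟩ := Finite.exists_le (fun k => -cc k)
  refine ⟨-M, fun k => ?_⟩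
  have h1 : -M ≤ cc k := by have := hM k; linarith
  exact (hmono k h1).trans (hcc k).le

/-- A pointwise scaling limit of a `K`-Lipschitz function is `K`-Lipschitz. -/
lemma lipschitz_limit {d : ℕ} (K : NNReal) (g ginf : (Fin d → ℝ) → ℝ)
    (hg : LipschitzWith K g)
    (hlim : ∀ x, Filter.Tendsto (fun c : ℝ => g (c • x) / c) Filter.atTop (nhds (ginf x))) :
    LipschitzWith K ginf := by
  apply LipschitzWith.of_dist_le_mul
  intro x y
  have h1 : Filter.Tendsto (fun c : ℝ => dist (g (c • x) / c) (g (c • y) / c))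
      Filter.atTop (nhds (dist (ginf x) (ginf y))) := (hlim x).dist (hlim y)
  refine le_of_tendsto h1 ?_
  filter_upwards [Filter.eventually_gt_atTop (0 : ℝ)] with c hc
  have h2 : dist (g (c • x)) (g (c • y)) ≤ K * dist (c • x) (c • y) := hg.dist_le_mul _ _
  have h3 : dist (c • x) (c • y) = c * dist x y := by
    rw [dist_smul₀, Real.norm_eq_abs, abs_of_pos hc]
  have h4 : dist (g (c • x) / c) (g (c • y) / c) = dist (g (c • x)) (g (c • y)) / c := by
    rw [Real.dist_eq, Real.dist_eq, div_sub_div_same, abs_div, abs_of_pos hc]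
  rw [h3] at h2
  rw [h4, div_le_iff₀ hc]
  calc dist (g (c • x)) (g (c • y)) ≤ K * (c * dist x y) := h2
    _ = K * dist x y * c := by ring

theorem stmt18 (d m : ℕ)
    (g : Fin m → (Fin d → ℝ) → ℝ) (ginf : Fin m → (Fin d → ℝ) → ℝ)
    (hgLip : ∀ k, ∃ K : NNReal, LipschitzWith K (g k))
    (hgS : ∀ k, SISTr (g k))
    (hglim : ∀ k, ∀ x : Fin d → ℝ,
      Filter.Tendsto (fun c : ℝ => g k (c • x) / c) Filter.atTop (nhds (ginf k x)))
    (hginfS : ∀ k, SISTrAt (ginf k) 0)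
    (ψ ψinf : (Fin m → ℝ) → ℝ)
    (hψLip : ∃ K : NNReal, LipschitzWith K ψ)
    (hψmono : ∀ y y' : Fin m → ℝ, (∀ i, y' i < y i) → ψ y' < ψ y)
    (hψtop : ∀ Mb : ℝ, ∃ N : ℝ, ∀ y : Fin m → ℝ, (∀ i, N ≤ y i) → Mb ≤ ψ y)
    (hψbot : ∀ Mb : ℝ, ∃ N : ℝ, ∀ y : Fin m → ℝ, (∀ i, y i ≤ N) → ψ y ≤ Mb)
    (hψlim : ∀ y : Fin m → ℝ,
      Filter.Tendsto (fun c : ℝ => ψ (c • y) / c) Filter.atTop (nhds (ψinf y)))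
    (hψinfLip : ∃ K : NNReal, LipschitzWith K ψinf)
    (hψinfmono : ∀ y y' : Fin m → ℝ, (∀ i, y' i < y i) → ψinf y' < ψinf y)
    (hψinftop : ∀ Mb : ℝ, ∃ N : ℝ, ∀ y : Fin m → ℝ, (∀ i, N ≤ y i) → Mb ≤ ψinf y)
    (hψinfbot : ∀ Mb : ℝ, ∃ N : ℝ, ∀ y : Fin m → ℝ, (∀ i, y i ≤ N) → ψinf y ≤ Mb) :
    (∃ K : NNReal, LipschitzWith K (fun x : Fin d → ℝ => ψ (fun k => g k x))) ∧
    SISTr (fun x : Fin d → ℝ => ψ (fun k => g k x)) ∧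
    (∀ x : Fin d → ℝ,
      Filter.Tendsto (fun c : ℝ => ψ (fun k => g k (c • x)) / c) Filter.atTop
        (nhds (ψinf (fun k => ginf k x)))) ∧
    SISTrAt (fun x : Fin d → ℝ => ψinf (fun k => ginf k x)) 0 := by
  obtain ⟨Kψ, hKψ⟩ := hψLip
  obtain ⟨Kψi, hKψi⟩ := hψinfLip
  choose Kg hKg using hgLip
  obtain ⟨K0, hK0⟩ := Finite.exists_le Kg
  -- the vector-valued map is Lipschitz
  have hG : LipschitzWith K0 (fun x : Fin d → ℝ => (fun k => g k x)) := by
    apply LipschitzWith.of_dist_le_mul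
    intro x y
    rcases eq_or_ne m 0 with hm | hm
    · subst hm
      have : (fun k : Fin 0 => g k x) = (fun k : Fin 0 => g k y) := by
        funext k; exact k.elim0
      rw [this, dist_self]
      positivity
    · haveI : Nonempty (Fin m) := ⟨⟨0, Nat.pos_of_ne_zero hm⟩⟩
      rw [dist_pi_le_iff (by positivity)]
      intro k
      calc dist (g k x) (g k y) ≤ Kg k * dist x y := (hKg k).dist_le_mul x y
        _ ≤ K0 * dist x y := by
            apply mul_le_mul_of_nonneg_right _ dist_nonneg
            exact_mod_cast hK0 k
  have hGinf : ∀ k, LipschitzWith (Kg k) (ginf k) :=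
    fun k => lipschitz_limit (Kg k) (g k) (ginf k) (hKg k) (hglim k)
  refine ⟨⟨Kψ * K0, hKψ.comp hG⟩, ?_, ?_, ?_⟩
  · -- SISTr of the composition
    intro x
    constructor
    · intro c c' hcc
      exact hψmono _ _ (fun k => (hgS k x).1 hcc)
    · apply surj_of_cont
      · apply hKψ.continuous.comp
        apply continuous_pi
        intro k
        exact (hKg k).continuous.comp
          (continuous_const.add (continuous_id.smul continuous_const))
      · intro M
        obtain ⟨N, hN⟩ := hψtop M
        obtain ⟨c, hc⟩ := exists_ge_all (fun k c => g k (x + c • (1 : Fin d → ℝ)))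
          (fun k => (hgS k x).1.monotone) (fun k => (hgS k x).2) N
        exact ⟨c, hN _ hc⟩
      · intro M
        obtain ⟨N, hN⟩ := hψbot M
        obtain ⟨c, hc⟩ := exists_le_all (fun k c => g k (x + c • (1 : Fin d → ℝ)))
          (fun k => (hgS k x).1.monotone) (fun k => (hgS k x).2) N
        exact ⟨c, hN _ hc⟩
  · -- scaling limit
    intro x
    set z : Fin m → ℝ := fun k => ginf k x with hz
    set Y : ℝ → Fin m → ℝ := fun c => (fun k => g k (c • x)) with hY
    have h1 : Filter.Tendsto (fun c : ℝ => ψ (c • z) / c) Filter.atTop (nhds (ψinf z)) :=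
      hψlim z
    have hh : Filter.Tendsto (fun c : ℝ => c⁻¹ • Y c) Filter.atTop (nhds z) := by
      rw [tendsto_pi_nhds]
      intro k
      have : ∀ c : ℝ, (c⁻¹ • Y c) k = g k (c • x) / c := by
        intro c; simp [hY, div_eq_inv_mul]
      simpa only [this] using hglim k x
    have h2 : Filter.Tendsto (fun c : ℝ => (ψ (Y c) - ψ (c • z)) / c)
        Filter.atTop (nhds 0) := by
      apply squeeze_zero_norm' (a := fun c => (Kψ : ℝ) * dist (c⁻¹ • Y c) z)
      · filter_upwards [Filter.eventually_gt_atTop (0 : ℝ)] with c hc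
        have hd : dist (ψ (Y c)) (ψ (c • z)) ≤ Kψ * dist (Y c) (c • z) :=
          hKψ.dist_le_mul _ _
        have he : dist (Y c) (c • z) = c * dist (c⁻¹ • Y c) z := by
          have : Y c = c • (c⁻¹ • Y c) := by rw [smul_inv_smul₀ hc.ne']
          conv_lhs => rw [this]
          rw [dist_smul₀, Real.norm_eq_abs, abs_of_pos hc]
        rw [Real.norm_eq_abs, abs_div, abs_of_pos hc, div_le_iff₀ hc]
        calc |ψ (Y c) - ψ (c • z)| = dist (ψ (Y c)) (ψ (c • z)) := (Real.dist_eq _ _).symm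
          _ ≤ Kψ * (c * dist (c⁻¹ • Y c) z) := by rw [← he]; exact hd
          _ = Kψ * dist (c⁻¹ • Y c) z * c := by ring
      · have := (hh.dist (tendsto_const_nhds (x := z))).const_mul (Kψ : ℝ)
        simpa using this
    have h3 := h1.add h2
    have heq : (fun c : ℝ => ψ (c • z) / c + (ψ (Y c) - ψ (c • z)) / c)
        = fun c : ℝ => ψ (Y c) / c := by
      funext c
      rw [← add_div]
      ring_nf
    rw [heq] at h3
    simpa using h3
  · -- SISTrAt of the limit at 0
    constructor
    · intro c c' hcc
      exact hψinfmono _ _ (fun k => (hginfS k).1 hcc)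
    · apply surj_of_cont
      · apply hKψi.continuous.comp
        apply continuous_pi
        intro k
        exact (hGinf k).continuous.comp
          (continuous_const.add (continuous_id.smul continuous_const))
      · intro M
        obtain ⟨N, hN⟩ := hψinftop M
        obtain ⟨c, hc⟩ := exists_ge_all
          (fun k c => ginf k ((0 : Fin d → ℝ) + c • (1 : Fin d → ℝ)))
          (fun k => (hginfS k).1.monotone) (fun k => (hginfS k).2) N
        exact ⟨c, hN _ hc⟩
      · intro M
        obtain ⟨N, hN⟩ := hψinfbot M
        obtain ⟨c, hc⟩ := exists_le_all
          (fun k c => ginf k ((0 : Fin d → ℝ) + c • (1 : Fin d → ℝ)))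
          (fun k => (hginfS k).1.monotone) (fun k => (hginfS k).2) N
        exact ⟨c, hN _ hc⟩
end
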